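/- arXiv:1310.1841 — 11 statements merged into one kernel-verified Lean document; each statement's English description precedes it below -/
import Mathlib

section
/- Let n be a positive integer with n ≠ 4, and let G be either the symmetric group S_n or the alternating group A_n. If H is a subgroup of G of index m with m < n, then H equals A_n or S_n. -/
/-!
Intersect `H` with `A_n`: the result has index less than `n` in `A_n`. The action of a group on
the cosets of a subgroup of index `m` has kernel (the normal core) of index dividing `m!`, and
`(n - 1)! < n! / 2 = |A_n|` for `n ≥ 3`, so in the simple group `A_n` (`n = 3` or `n ≥ 5`) the
core, hence the subgroup, is everything. Thus `A_n ≤ H`, and `A_n` has index at most `2`.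
-/

open Equiv Equiv.Perm Subgroup
open scoped Nat

namespace Subgroup

variable {G : Type*} [Group G]

theorem index_normalCore_dvd_factorial [Finite G] (H : Subgroup G) :
    H.normalCore.index ∣ H.index ! := by
  rw [normalCore_eq_ker, index_ker, index_eq_card, ← Nat.card_perm]
  exact card_subgroup_dvd_card _

theorem eq_top_of_factorial_index_lt_card [Finite G] [IsSimpleGroup G] (H : Subgroup G)
    (h : H.index ! < Nat.card G) : H = ⊤ := by
  rcases H.normalCore_normal.eq_bot_or_eq_top with hbot | htop
  · have hdvd := H.index_normalCore_dvd_factorial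
    rw [hbot, index_bot] at hdvd
    exact absurd (Nat.le_of_dvd (Nat.factorial_pos _) hdvd) h.not_ge
  · exact eq_top_iff.mpr (htop ▸ H.normalCore_le)

end Subgroup

namespace Equiv.Perm

variable {α : Type*} [Fintype α] [DecidableEq α]

theorem isSimpleGroup_alternatingGroup (hα : Nat.card α = 3 ∨ 5 ≤ Nat.card α) :
    IsSimpleGroup (alternatingGroup α) := by
  rcases hα with h3 | h5
  · have : Nontrivial α := Finite.one_lt_card_iff_nontrivial.mp (by omega)
    have hcard : Nat.card (alternatingGroup α) = 3 := by
      rw [nat_card_alternatingGroup, h3]; rfl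
    have : Fact (Nat.card (alternatingGroup α)).Prime := ⟨hcard ▸ Nat.prime_three⟩
    exact isSimpleGroup_of_prime_card rfl
  · exact alternatingGroup.isSimpleGroup h5

theorem factorial_lt_card_alternatingGroup {m : ℕ} (h3 : 3 ≤ Nat.card α)
    (hm : m < Nat.card α) : m ! < Nat.card (alternatingGroup α) := by
  have : Nontrivial α := Finite.one_lt_card_iff_nontrivial.mp (by omega)
  obtain ⟨k, hk⟩ : ∃ k, Nat.card α = k + 1 := ⟨Nat.card α - 1, by omega⟩
  have hfac : m ! ≤ k ! := Nat.factorial_le (by omega)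
  have hpos := Nat.factorial_pos k
  have hcard := two_mul_nat_card_alternatingGroup (α := α)
  rw [Nat.card_perm, hk, Nat.factorial_succ] at hcard
  nlinarith

theorem alternatingGroup_le_of_relIndex_lt (hα : Nat.card α ≠ 4) {H : Subgroup (Perm α)}
    (h : H.relIndex (alternatingGroup α) < Nat.card α) : alternatingGroup α ≤ H := by
  by_cases h2 : Nat.card α ≤ 2
  · simp [alternatingGroup.eq_bot_of_card_le_two h2]
  have := isSimpleGroup_alternatingGroup (α := α) (by omega)
  rw [← subgroupOf_eq_top]
  exact (H.subgroupOf _).eq_top_of_factorial_index_lt_card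
    (factorial_lt_card_alternatingGroup (by omega) h)

theorem eq_alternatingGroup_or_eq_top_of_le {H : Subgroup (Perm α)}
    (h : alternatingGroup α ≤ H) : H = alternatingGroup α ∨ H = ⊤ := by
  have hA : (alternatingGroup α).index ∣ 2 := by
    rcases subsingleton_or_nontrivial α
    · simp [alternatingGroup.index_eq_one]
    · rw [alternatingGroup.index_eq_two]
  rcases (Nat.dvd_prime Nat.prime_two).mp ((index_dvd_of_le h).trans hA) with h1 | h2
  · exact Or.inr (index_eq_one.mp h1)
  · exact Or.inl (eq_alternatingGroup_of_index_eq_two h2)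

end Equiv.Perm

theorem stmt0_general (n m : ℕ) (hn4 : n ≠ 4)
    (G H : Subgroup (Equiv.Perm (Fin n)))
    (hG : G = ⊤ ∨ G = alternatingGroup (Fin n))
    (hHG : H ≤ G) (hm : H.relIndex G = m) (hmn : m < n) :
    H = alternatingGroup (Fin n) ∨ H = ⊤ := by
  have hAG : alternatingGroup (Fin n) ≤ G := by
    rcases hG with rfl | rfl <;> simp
  have hrel : H.relIndex (alternatingGroup (Fin n)) < Nat.card (Fin n) := by
    rw [Nat.card_fin]
    exact (relIndex_le_of_le_right hAG (H.subgroupOf G).index_ne_zero_of_finite).trans_lt (hm ▸ hmn)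
  have hAH := alternatingGroup_le_of_relIndex_lt (by simpa using hn4) hrel
  rcases hG with rfl | rfl
  · exact eq_alternatingGroup_or_eq_top_of_le hAH
  · exact Or.inl (le_antisymm hHG hAH)

/-- Let `n` be a positive integer with `n ≠ 4`, and let `G` be either the symmetric group
`S_n` or the alternating group `A_n`. If `H` is a subgroup of `G` of index `m` with `m < n`,
then `H` equals `A_n` or `S_n`. -/
theorem stmt0 (n m : ℕ) (hn : 0 < n) (hn4 : n ≠ 4)
    (G H : Subgroup (Equiv.Perm (Fin n)))
    (hG : G = ⊤ ∨ G = alternatingGroup (Fin n))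
    (hHG : H ≤ G) (hm : H.relIndex G = m) (hmn : m < n) :
    H = alternatingGroup (Fin n) ∨ H = ⊤ :=
  stmt0_general n m hn4 G H hG hHG hm hmn
end

section
/- Any subgroup of S_n of order exactly (n-1)! that does not act transitively on {0,...,n-1} is the stabilizer of a point, i.e., equals the set of permutations fixing some i ∈ {0,...,n-1}. -/
/-!
A non-transitive `H` preserves a proper nonempty subset `s` (an orbit), so `|H|` is at most the
order `|s|! (n - |s|)!` of the setwise stabilizer of `s`. This is smaller than `(n - 1)!` unless
`s` or its complement is a single point, which `H` then fixes; as the point stabilizer has order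
`(n - 1)!`, `H` is all of it.
-/

open MulAction Equiv Nat
open scoped Pointwise

theorem Nat.factorial_mul_factorial_lt_factorial_add_sub_one {a b : ℕ} (ha : 2 ≤ a) (hb : 2 ≤ b) :
    a ! * b ! < (a + b - 1)! := by
  obtain ⟨c, rfl⟩ : ∃ c, a = c + 2 := ⟨a - 2, by omega⟩
  obtain ⟨d, rfl⟩ : ∃ d, b = d + 2 := ⟨b - 2, by omega⟩
  -- `(a + b - 1)! = C(a + b - 1, b - 1) a! (b - 1)!`, and this binomial coefficient exceeds `b`.
  have hchoose : d + 2 < (c + 2 + (d + 1)).choose (d + 1) :=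
    calc d + 2 < (d + 2).choose 1 + (d + 2).choose 2 := by
          rw [choose_one_right]; have := choose_pos (show 2 ≤ d + 2 by omega); omega
      _ = (d + 1 + 2).choose 2 := (choose_succ_succ' _ _).symm
      _ = (d + 1 + 2).choose (d + 1) := choose_symm_add.symm
      _ ≤ (c + 2 + (d + 1)).choose (d + 1) := choose_le_choose _ (by omega)
  calc (c + 2)! * (d + 2)! = (d + 2) * (c + 2)! * (d + 1)! := by rw [factorial_succ (d + 1)]; ring
    _ < (c + 2 + (d + 1)).choose (d + 1) * (c + 2)! * (d + 1)! := by gcongr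
    _ = (c + 2 + (d + 2) - 1)! := by rw [add_choose_mul_factorial_mul_factorial]; congr 1

theorem Subgroup.le_stabilizer_orbit {G α : Type*} [Group G] [MulAction G α] (H : Subgroup G)
    (a : α) : H ≤ stabilizer G (orbit H a) :=
  fun g hg => smul_orbit (⟨g, hg⟩ : H) a

namespace Equiv.Perm

variable {α : Type*}

theorem stabilizer_eq_range_subtypeCongrHom (s : Set α) [DecidablePred (· ∈ s)] :
    stabilizer (Perm α) s = (subtypeCongrHom (· ∈ s)).range := by
  ext g
  rw [mem_stabilizer_set]
  constructor
  · intro hg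
    refine ⟨⟨g.subtypePerm hg, g.subtypePerm (fun x => not_congr (hg x))⟩, ?_⟩
    ext x
    by_cases hx : x ∈ s
    · simp [subtypeCongr.left_apply _ _ hx]
    · simp [subtypeCongr.right_apply _ _ hx]
  · rintro ⟨⟨e, f⟩, rfl⟩ x
    by_cases hx : x ∈ s
    · simp [subtypeCongr.left_apply _ _ hx, hx]
    · simp [subtypeCongr.right_apply _ _ hx, hx, (f ⟨x, hx⟩).2]

variable [Finite α]

theorem card_stabilizer_set (s : Set α) :
    Nat.card (stabilizer (Perm α) s) = s.ncard ! * sᶜ.ncard ! := by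
  classical
  rw [stabilizer_eq_range_subtypeCongrHom,
    ← Nat.card_congr (MonoidHom.ofInjective (subtypeCongrHom_injective (· ∈ s))).toEquiv,
    Nat.card_prod, Nat.card_perm, Nat.card_perm]
  rfl

theorem card_stabilizer (a : α) :
    Nat.card (stabilizer (Perm α) a) = (Nat.card α - 1)! := by
  rw [← stabilizer_singleton, card_stabilizer_set, ← Set.ncard_add_ncard_compl {a},
    Set.ncard_singleton]
  simp

theorem exists_le_stabilizer_of_factorial_le_card {H : Subgroup (Perm α)} {s : Set α}
    (hs : s.Nonempty) (hsc : sᶜ.Nonempty) (hH : H ≤ stabilizer (Perm α) s)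
    (hcard : (Nat.card α - 1)! ≤ Nat.card H) : ∃ a : α, H ≤ stabilizer (Perm α) a := by
  have hsum := Set.ncard_add_ncard_compl s
  have hpos := (Set.ncard_pos s.toFinite).mpr hs
  have hcpos := (Set.ncard_pos sᶜ.toFinite).mpr hsc
  have hle := hcard.trans ((Subgroup.card_le_of_le hH).trans (card_stabilizer_set s).le)
  have hone : s.ncard = 1 ∨ sᶜ.ncard = 1 := by
    by_contra! h
    have := factorial_mul_factorial_lt_factorial_add_sub_one (a := s.ncard) (b := sᶜ.ncard)
      (by omega) (by omega)
    rw [hsum] at this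
    omega
  rcases hone with h | h
  · obtain ⟨a, ha⟩ := Set.ncard_eq_one.mp h
    exact ⟨a, by rwa [ha, stabilizer_singleton] at hH⟩
  · obtain ⟨a, ha⟩ := Set.ncard_eq_one.mp h
    exact ⟨a, by rwa [← stabilizer_compl, ha, stabilizer_singleton] at hH⟩

end Equiv.Perm

/-- Any subgroup of `S_n` of order exactly `(n-1)!` that does not act transitively on
`{0,…,n-1}` is the stabilizer of a point. -/
theorem stmt3 (n : ℕ) (H : Subgroup (Equiv.Perm (Fin n)))
    (hcard : Nat.card H = (n - 1).factorial)
    (hnt : ¬ ∀ i j : Fin n, ∃ t ∈ H, t i = j) :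
    ∃ i : Fin n, ∀ g : Equiv.Perm (Fin n), g ∈ H ↔ g i = i := by
  push Not at hnt
  obtain ⟨i, j, hj⟩ := hnt
  have hjO : j ∈ (orbit H i)ᶜ := fun ⟨t, ht⟩ => hj t t.2 ht
  obtain ⟨a, ha⟩ := Perm.exists_le_stabilizer_of_factorial_le_card ⟨i, mem_orbit_self i⟩ ⟨j, hjO⟩
    (H.le_stabilizer_orbit i) (by rw [hcard, Nat.card_fin])
  have hHa : H = stabilizer (Perm (Fin n)) a :=
    Subgroup.eq_of_le_of_card_ge ha (by rw [Perm.card_stabilizer, Nat.card_fin, hcard])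
  exact ⟨a, fun g => by rw [hHa, mem_stabilizer_iff, Perm.smul_def]⟩
end

section
/- Let m ≤ n with n ≥ 5 and let H be a subgroup of S_m × S_n with π_1(H) = S_m and π_2(H) = S_n. If H_0 = {h ∈ H : π_1(h)(0) = 0} and π_2(H_0) acts transitively on {0,...,n-1}, then H acts transitively on {0,...,m-1} × {0,...,n-1} (with the coordinatewise action). -/
/-!
Move the first coordinate of `p` to the base point `a₀` by some `a ∈ H`, and likewise the first
coordinate of `q` by some `b ∈ H`. The stabiliser of `a₀` in `H` is transitive on the second
coordinate, so some `t ∈ H` fixing `a₀` carries `a.2 • p.2` to `b.2 • q.2`; then `b⁻¹ * t * a`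
carries `p` to `q`.
-/

theorem Subgroup.exists_prod_smul_eq_of_stabilizer_transitive {G₁ G₂ α β : Type*}
    [Group G₁] [Group G₂] [MulAction G₁ α] [MulAction G₂ β] (H : Subgroup (G₁ × G₂)) (a₀ : α)
    (hα : ∀ a, ∃ h ∈ H, h.1 • a = a₀) (hβ : ∀ b b' : β, ∃ h ∈ H, h.1 • a₀ = a₀ ∧ h.2 • b = b')
    (p q : α × β) : ∃ h ∈ H, (h.1 • p.1, h.2 • p.2) = q := by
  obtain ⟨a, haH, ha⟩ := hα p.1
  obtain ⟨b, hbH, hb⟩ := hα q.1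
  obtain ⟨t, htH, ht₁, ht₂⟩ := hβ (a.2 • p.2) (b.2 • q.2)
  refine ⟨b⁻¹ * t * a, H.mul_mem (H.mul_mem (H.inv_mem hbH) htH) haH, Prod.ext ?_ ?_⟩
  · simp only [Prod.fst_mul, Prod.fst_inv, mul_smul, ha, ht₁, inv_smul_eq_iff, hb]
  · simp only [Prod.snd_mul, Prod.snd_inv, mul_smul, ht₂, inv_smul_smul]

theorem stmt5_general (m n : ℕ) (hm : 0 < m)
    (H : Subgroup (Equiv.Perm (Fin m) × Equiv.Perm (Fin n)))
    (h1 : Subgroup.map (MonoidHom.fst (Equiv.Perm (Fin m)) (Equiv.Perm (Fin n))) H = ⊤)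
    (H0 : Subgroup (Equiv.Perm (Fin m) × Equiv.Perm (Fin n)))
    (hH0 : ∀ h, h ∈ H0 ↔ h ∈ H ∧ h.1 (⟨0, hm⟩ : Fin m) = (⟨0, hm⟩ : Fin m))
    (htr : ∀ j j' : Fin n, ∃ h ∈ H0, h.2 j = j') :
    ∀ p q : Fin m × Fin n, ∃ h ∈ H, (h.1 p.1, h.2 p.2) = q := by
  have hfst : ∀ a, ∃ h ∈ H, h.1 a = ⟨0, hm⟩ := by
    intro a
    obtain ⟨h, hH, hσ⟩ := (h1 ▸ Subgroup.mem_top (Equiv.swap a ⟨0, hm⟩) :)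
    exact ⟨h, hH, by rw [← MonoidHom.coe_fst, hσ, Equiv.swap_apply_left]⟩
  have hsnd : ∀ j j', ∃ h ∈ H, h.1 ⟨0, hm⟩ = ⟨0, hm⟩ ∧ h.2 j = j' := by
    intro j j'
    obtain ⟨h, hH0', hj⟩ := htr j j'
    obtain ⟨hH, hfix⟩ := (hH0 h).1 hH0'
    exact ⟨h, hH, hfix, hj⟩
  exact H.exists_prod_smul_eq_of_stabilizer_transitive _ hfst hsnd

/-- Let `m ≤ n`, `n ≥ 5`, and let `H ≤ S_m × S_n` have both projections surjective. If
`H₀ = {h ∈ H : π₁(h)(0) = 0}` and `π₂(H₀)` acts transitively on `{0,…,n-1}`, then `H` acts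
transitively on `{0,…,m-1} × {0,…,n-1}` coordinatewise. -/
theorem stmt5 (m n : ℕ) (hm : 0 < m) (hmn : m ≤ n) (hn : 5 ≤ n)
    (H : Subgroup (Equiv.Perm (Fin m) × Equiv.Perm (Fin n)))
    (h1 : Subgroup.map (MonoidHom.fst (Equiv.Perm (Fin m)) (Equiv.Perm (Fin n))) H = ⊤)
    (h2 : Subgroup.map (MonoidHom.snd (Equiv.Perm (Fin m)) (Equiv.Perm (Fin n))) H = ⊤)
    (H0 : Subgroup (Equiv.Perm (Fin m) × Equiv.Perm (Fin n)))
    (hH0 : ∀ h, h ∈ H0 ↔ h ∈ H ∧ h.1 (⟨0, hm⟩ : Fin m) = (⟨0, hm⟩ : Fin m))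
    (htr : ∀ j j' : Fin n, ∃ h ∈ H0, h.2 j = j') :
    ∀ p q : Fin m × Fin n, ∃ h ∈ H, (h.1 p.1, h.2 p.2) = q :=
  stmt5_general m n hm H h1 H0 hH0 htr
end

section
/- Let H be a subgroup of S_n × S_n whose two projections to S_n are both surjective. Suppose that for every (s,t) ∈ H, s(0) = 0 implies t(0) = 0. Then there exists a permutation u ∈ S_n with u(0) = 0 such that for all (s,t) ∈ H, t(0) = u(s(0)). -/
/-!
If `(s, t), (s', t') ∈ H` satisfy `s 0 = s' 0`, then `s'⁻¹ s` fixes `0`, so `t'⁻¹ t` does too and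
`t 0 = t' 0`. Hence `s 0 ↦ t 0` is a well-defined map on all of `Fin n` (the first projection is
onto), it is surjective (the second projection is onto), so it is a permutation, and it fixes `0`
because `(1, 1) ∈ H`.
-/

open Equiv

namespace Equiv.Perm

variable {α β : Type*} {H : Subgroup (Perm α × Perm β)} {a : α} {b : β}

theorem snd_apply_eq_of_fst_apply_eq (hfix : ∀ p ∈ H, p.1 a = a → p.2 b = b)
    {p q : Perm α × Perm β} (hp : p ∈ H) (hq : q ∈ H) (h : p.1 a = q.1 a) : p.2 b = q.2 b := by
  have hfst : (q⁻¹ * p).1 a = a := by simp [Perm.mul_apply, h]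
  have hsnd : q.2⁻¹ (p.2 b) = b := hfix _ (mul_mem (inv_mem hq) hp) hfst
  simpa using congrArg q.2 hsnd

theorem exists_mem_fst_apply_eq (h1 : H.map (MonoidHom.fst (Perm α) (Perm β)) = ⊤) (a x : α) :
    ∃ p ∈ H, p.1 a = x := by
  obtain ⟨s, hs⟩ := MulAction.exists_smul_eq (Perm α) a x
  obtain ⟨p, hp, rfl⟩ : s ∈ H.map (MonoidHom.fst (Perm α) (Perm β)) := h1 ▸ Subgroup.mem_top s
  exact ⟨p, hp, hs⟩

theorem exists_mem_snd_apply_eq (h2 : H.map (MonoidHom.snd (Perm α) (Perm β)) = ⊤) (b y : β) :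
    ∃ p ∈ H, p.2 b = y := by
  obtain ⟨t, ht⟩ := MulAction.exists_smul_eq (Perm β) b y
  obtain ⟨p, hp, rfl⟩ : t ∈ H.map (MonoidHom.snd (Perm α) (Perm β)) := h2 ▸ Subgroup.mem_top t
  exact ⟨p, hp, ht⟩

theorem exists_surjective_snd_apply_eq (h1 : H.map (MonoidHom.fst (Perm α) (Perm β)) = ⊤)
    (h2 : H.map (MonoidHom.snd (Perm α) (Perm β)) = ⊤) (hfix : ∀ p ∈ H, p.1 a = a → p.2 b = b) :
    ∃ f : α → β, f.Surjective ∧ ∀ p ∈ H, p.2 b = f (p.1 a) := by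
  choose g hgH hg using exists_mem_fst_apply_eq h1 a
  have hf : ∀ p ∈ H, p.2 b = (g (p.1 a)).2 b := fun p hp =>
    snd_apply_eq_of_fst_apply_eq hfix hp (hgH _) (hg _).symm
  refine ⟨fun x => (g x).2 b, fun y => ?_, hf⟩
  obtain ⟨p, hp, rfl⟩ := exists_mem_snd_apply_eq h2 b y
  exact ⟨p.1 a, (hf p hp).symm⟩

theorem exists_perm_snd_apply_eq [Finite α] {H : Subgroup (Perm α × Perm α)} {a : α}
    (h1 : H.map (MonoidHom.fst (Perm α) (Perm α)) = ⊤)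
    (h2 : H.map (MonoidHom.snd (Perm α) (Perm α)) = ⊤) (hfix : ∀ p ∈ H, p.1 a = a → p.2 a = a) :
    ∃ u : Perm α, u a = a ∧ ∀ p ∈ H, p.2 a = u (p.1 a) := by
  obtain ⟨f, hsurj, hf⟩ := exists_surjective_snd_apply_eq h1 h2 hfix
  refine ⟨Equiv.ofBijective f (Finite.surjective_iff_bijective.mp hsurj), ?_, hf⟩
  simpa using (hf 1 (one_mem H)).symm

end Equiv.Perm

/-- Let `H ≤ S_n × S_n` have both projections surjective, and suppose for every `(s,t) ∈ H`,
`s(0) = 0` implies `t(0) = 0`. Then there is a permutation `u` with `u(0) = 0` such that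
`t(0) = u(s(0))` for all `(s,t) ∈ H`. -/
theorem stmt6 (n : ℕ) (hn : 0 < n)
    (H : Subgroup (Equiv.Perm (Fin n) × Equiv.Perm (Fin n)))
    (h1 : Subgroup.map (MonoidHom.fst (Equiv.Perm (Fin n)) (Equiv.Perm (Fin n))) H = ⊤)
    (h2 : Subgroup.map (MonoidHom.snd (Equiv.Perm (Fin n)) (Equiv.Perm (Fin n))) H = ⊤)
    (hfix : ∀ p ∈ H, p.1 (⟨0, hn⟩ : Fin n) = (⟨0, hn⟩ : Fin n) →
      p.2 (⟨0, hn⟩ : Fin n) = (⟨0, hn⟩ : Fin n)) :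
    ∃ u : Equiv.Perm (Fin n), u (⟨0, hn⟩ : Fin n) = (⟨0, hn⟩ : Fin n) ∧
      ∀ p ∈ H, p.2 (⟨0, hn⟩ : Fin n) = u (p.1 (⟨0, hn⟩ : Fin n)) :=
  Equiv.Perm.exists_perm_snd_apply_eq h1 h2 hfix
end

section
/- Let H be a subgroup of S_m × S_n (m ≤ n, 2 ≤ m, 5 ≤ n, (m,n) ≠ (6,6)) with both projections surjective and acting transitively on {0,...,m-1} × {0,...,n-1}. Then H acts transitively on the set of unordered pairs {(i,j), (k,ℓ)} with i ≠ k and j ≠ ℓ; it acts transitively on the set of unordered pairs {(i,j), (i,ℓ)} with j ≠ ℓ; and it acts transitively on the set of unordered pairs {(i,j), (k,j)} with i ≠ k. -/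
/-!
Let `N = {b | (1, b) ∈ H}`; it is normal in `S_n` because the second projection of `H` is onto.
If `N` were trivial, `n! ≤ |H| ≤ m!` would force `m = n` and `H` would be the graph of an
automorphism `f` of `S_n`. For `n ≠ 6`, `f` maps transpositions to transpositions, since it
preserves centralizer orders and a product of `k` disjoint transpositions has a centralizer of
order `2^k k! (n - 2k)!`, which is `2 (n - 2)!` only for `k = 1`. Transitivity of `H` makes the
image under `f` of a point stabilizer transitive; as it is generated by transpositions it is all of
`S_n`, which is absurd. Hence `N` contains `A_n`, which is 2-transitive, so `H` contains an element
`(σ, τ)` for every `σ` and every prescribed action of `τ` on two points.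
-/

open Nat Equiv Equiv.Perm Subgroup Function

namespace Nat

theorem two_pow_mul_factorial_lt {k : ℕ} (hk : 4 ≤ k) : 2 ^ k * k ! < 2 * (2 * k - 2)! := by
  induction k, hk using Nat.le_induction with
  | base => decide
  | succ k hk ih =>
    obtain ⟨j, rfl⟩ : ∃ j, k = j + 4 := ⟨k - 4, by omega⟩
    have hstep : (2 * (j + 4 + 1) - 2)! = (2 * j + 8) * ((2 * j + 7) * (2 * (j + 4) - 2)!) := by
      rw [show 2 * (j + 4) - 2 = 2 * j + 6 by omega, show 2 * (j + 4 + 1) - 2 = 2 * j + 8 by omega,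
        ← factorial_succ, ← factorial_succ]
    rw [hstep, factorial_succ, pow_succ]
    calc 2 ^ (j + 4) * 2 * ((j + 4 + 1) * (j + 4)!) = (2 * j + 10) * (2 ^ (j + 4) * (j + 4)!) := by
          ring
      _ < ((2 * j + 8) * (2 * j + 7)) * (2 * (2 * (j + 4) - 2)!) :=
        Nat.mul_lt_mul_of_le_of_lt (by nlinarith) ih (by positivity)
      _ = _ := by ring

/-- Of the excluded cases, `(k, r) = (3, 0)` is the equality `48 = 48` behind the outer
automorphism of `S₆`. -/
theorem factorial_mul_two_pow_mul_factorial_lt {k r : ℕ} (hk : 2 ≤ k)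
    (hr : k = 2 ∨ k = 3 → 1 ≤ r) : r ! * 2 ^ k * k ! < 2 * (2 * k + r - 2)! := by
  induction r with
  | zero => simpa using two_pow_mul_factorial_lt (by omega : 4 ≤ k)
  | succ r ih =>
    have hstep : (2 * k + (r + 1) - 2)! = (2 * k + r - 2 + 1) * (2 * k + r - 2)! := by
      rw [← factorial_succ]; congr 1; omega
    rw [hstep, factorial_succ r]
    by_cases hsmall : r = 0 ∧ (k = 2 ∨ k = 3)
    · obtain ⟨rfl, rfl | rfl⟩ := hsmall <;> decide
    · have h1 : r + 1 ≤ 2 * k + r - 2 + 1 := by omega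
      calc (r + 1) * r ! * 2 ^ k * k ! = (r + 1) * (r ! * 2 ^ k * k !) := by ring
        _ < (2 * k + r - 2 + 1) * (2 * (2 * k + r - 2)!) :=
          Nat.mul_lt_mul_of_le_of_lt h1 (ih (by omega)) (by positivity)
        _ = _ := by ring

end Nat

theorem MulEquiv.card_centralizer_apply {G G' : Type*} [Group G] [Group G'] (f : G ≃* G') (g : G) :
    Nat.card (centralizer {f g}) = Nat.card (centralizer {g}) := by
  refine Nat.card_congr (f.toEquiv.subtypeEquiv fun x => ?_).symm
  simp only [mem_centralizer_singleton_iff, MulEquiv.toEquiv_eq_coe,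
    EquivLike.coe_coe, ← map_mul, f.injective.eq_iff]

theorem Subgroup.surjective_comp_subtype_of_map_eq_top {G G' : Type*} [Group G] [Group G']
    {f : G →* G'} {H : Subgroup G} (h : H.map f = ⊤) : Surjective (f ∘ H.subtype) := by
  rw [← MonoidHom.coe_comp, ← MonoidHom.range_eq_top, MonoidHom.range_comp, range_subtype, h]

theorem MulAction.exists_smul_eq_smul_eq_of_iff {G X : Type*} [Group G] [MulAction G X]
    [IsMultiplyPretransitive G X 2] {a₁ a₂ b₁ b₂ : X} (h : a₁ = a₂ ↔ b₁ = b₂) :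
    ∃ g : G, g • a₁ = b₁ ∧ g • a₂ = b₂ := by
  by_cases ha : a₁ = a₂
  · subst ha
    have := isPretransitive_of_is_two_pretransitive (G := G) (α := X)
    obtain ⟨g, hg⟩ := exists_smul_eq G a₁ b₁
    exact ⟨g, hg, hg.trans (h.mp rfl)⟩
  · exact is_two_pretransitive_iff.mp ‹_› ha (h.not.mp ha)

namespace Equiv.Perm
variable {α β : Type*} [Fintype β] [DecidableEq β] {H : Subgroup (Perm α × Perm β)}

section
variable [Fintype α] [DecidableEq α]

theorem card_centralizer_of_cycleType_eq_replicate {σ : Perm α} {k : ℕ}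
    (h : σ.cycleType = Multiset.replicate k 2) :
    Nat.card (centralizer {σ}) = (Fintype.card α - 2 * k)! * 2 ^ k * k ! := by
  rw [nat_card_centralizer, h]
  rcases Nat.eq_zero_or_pos k with rfl | hk
  · simp
  · simp [Multiset.toFinset_replicate, hk.ne', mul_comm]

theorem isSwap_map_of_isSwap (f : Perm α ≃* Perm β) (hcard : Fintype.card α = Fintype.card β)
    (h5 : 5 ≤ Fintype.card β) (h6 : Fintype.card β ≠ 6) {t : Perm α} (ht : t.IsSwap) :
    (f t).IsSwap := by
  have horder : orderOf (f t) = 2 := by rw [MulEquiv.orderOf_eq, ht.orderOf]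
  obtain ⟨j, hj⟩ := cycleType_prime_order (horder ▸ Nat.prime_two)
  rw [horder] at hj
  have hsum : 2 * (j + 1) ≤ Fintype.card β := by
    have := sum_cycleType_le (f t)
    rw [hj, Multiset.sum_replicate, smul_eq_mul] at this
    omega
  have hcent := f.card_centralizer_apply t
  rw [card_centralizer_of_cycleType_eq_replicate hj,
    card_centralizer_of_cycleType_eq_replicate (k := 1) (by simpa using isSwap_iff_cycleType.mp ht),
    hcard] at hcent
  rcases j with _ | j
  · exact isSwap_iff_cycleType.mpr (by simpa using hj)
  · obtain ⟨r, hr⟩ : ∃ r, Fintype.card β = 2 * (j + 2) + r := ⟨_, (Nat.add_sub_cancel' hsum).symm⟩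
    have hlt := factorial_mul_two_pow_mul_factorial_lt (k := j + 2) (r := r) (by omega) (by omega)
    rw [hr, show 2 * (j + 2) + r - 2 * (j + 1 + 1) = r by omega] at hcent
    simp only [pow_one, factorial_one, mul_one] at hcent
    exact absurd (hcent.trans (mul_comm _ _)) hlt.ne

theorem stabilizer_eq_closure_isSwap (a : α) :
    MulAction.stabilizer (Perm α) a = Subgroup.closure {τ : Perm α | τ.IsSwap ∧ τ a = a} := by
  refine le_antisymm (fun σ hσ => ?_) (closure_le _ |>.mpr fun τ hτ => hτ.2)
  rw [MulAction.mem_stabilizer_iff, Perm.smul_def] at hσ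
  refine (mem_closure_isSwap fun τ hτ => hτ.1).mpr ⟨Set.toFinite _, fun x => ?_⟩
  by_cases hx : σ x = x
  · rw [hx]; exact MulAction.mem_orbit_self x
  have hxa : x ≠ a := by rintro rfl; exact hx hσ
  have hσxa : σ x ≠ a := fun h => hxa (σ.injective (h.trans hσ.symm))
  refine ⟨⟨swap x (σ x), subset_closure ⟨⟨x, σ x, Ne.symm hx, rfl⟩, ?_⟩⟩, swap_apply_left x (σ x)⟩
  exact swap_apply_of_ne_of_ne hxa.symm hσxa.symm

theorem exists_forall_apply_ne_of_isSwap_map [Nontrivial α] (f : Perm α ≃* Perm β)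
    (hf : ∀ t : Perm α, t.IsSwap → (f t).IsSwap) (a : α) :
    ∃ b c : β, ∀ σ : Perm α, σ a = a → f σ b ≠ c := by
  by_contra! htr
  have : MulAction.IsPretransitive ((MulAction.stabilizer (Perm α) a).map f.toMonoidHom) β :=
    ⟨fun b c => by
      obtain ⟨σ, hσ, hσbc⟩ := htr b c
      exact ⟨⟨f σ, σ, hσ, rfl⟩, hσbc⟩⟩
  have hKf : (MulAction.stabilizer (Perm α) a).map f.toMonoidHom = ⊤ := by
    rw [stabilizer_eq_closure_isSwap, MonoidHom.map_closure] at this ⊢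
    exact closure_of_isSwap_of_isPretransitive (by rintro _ ⟨t, ht, rfl⟩; exact hf t ht.1)
  have hK : MulAction.stabilizer (Perm α) a = ⊤ := by
    rw [← comap_map_eq_self_of_injective (f := f.toMonoidHom) f.injective
      (MulAction.stabilizer (Perm α) a), hKf, comap_top]
  obtain ⟨b, hba⟩ := exists_ne a
  have hswap : swap a b ∈ MulAction.stabilizer (Perm α) a := hK ▸ mem_top _
  rw [MulAction.mem_stabilizer_iff, Perm.smul_def, swap_apply_left] at hswap
  exact hba hswap

theorem exists_mulEquiv_eq_graph_of_goursatSnd_eq_bot (hcard : Fintype.card α ≤ Fintype.card β)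
    (hβ : 2 ≤ Fintype.card β) (h₁ : Surjective (Prod.fst ∘ H.subtype))
    (h₂ : Surjective (Prod.snd ∘ H.subtype)) (hbot : H.goursatSnd = ⊥) :
    Fintype.card α = Fintype.card β ∧ ∃ e : Perm α ≃* Perm β, H = e.toMonoidHom.graph := by
  have hinj₁ : Injective (Prod.fst ∘ H.subtype) :=
    (injective_iff_map_eq_one ((MonoidHom.fst _ _).comp H.subtype)).mpr fun x hx => by
      have hx₂ : x.1.2 ∈ H.goursatSnd := mem_goursatSnd.mpr (by simp [← hx])
      rw [hbot, mem_bot] at hx₂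
      exact Subtype.ext (Prod.ext hx hx₂)
  have hcardH : Nat.card H = (Fintype.card α)! := by
    rw [Nat.card_eq_of_bijective _ ⟨hinj₁, h₁⟩, Nat.card_eq_fintype_card, Fintype.card_perm]
  have hcardβ : (Fintype.card β)! ≤ Nat.card H := by
    simpa [Nat.card_eq_fintype_card, Fintype.card_perm] using Nat.card_le_card_of_surjective _ h₂
  have hαβ : Fintype.card α = Fintype.card β :=
    ((factorial_inj (by omega)).mp (le_antisymm (factorial_le hcard) (hcardH ▸ hcardβ)).symm).symm
  have hinj₂ : Injective (Prod.snd ∘ H.subtype) :=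
    ((Nat.bijective_iff_surjective_and_card _).mpr ⟨h₂, by
      rw [hcardH, Nat.card_eq_fintype_card, Fintype.card_perm, hαβ]⟩).1
  exact ⟨hαβ, exists_mulEquiv_eq_graph ⟨hinj₁, h₁⟩ ⟨hinj₂, h₂⟩⟩

theorem goursatSnd_ne_bot (hcard : Fintype.card α ≤ Fintype.card β) (h5 : 5 ≤ Fintype.card β)
    (h66 : ¬(Fintype.card α = 6 ∧ Fintype.card β = 6))
    (h₁ : Surjective (Prod.fst ∘ H.subtype)) (h₂ : Surjective (Prod.snd ∘ H.subtype))
    (htr : ∀ p q : α × β, ∃ h ∈ H, (h.1 p.1, h.2 p.2) = q) : H.goursatSnd ≠ ⊥ := by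
  intro hbot
  obtain ⟨hαβ, e, he⟩ :=
    exists_mulEquiv_eq_graph_of_goursatSnd_eq_bot hcard (by omega) h₁ h₂ hbot
  have : Nontrivial α := Fintype.one_lt_card_iff_nontrivial.mp (by omega)
  obtain ⟨a, -⟩ := exists_pair_ne α
  obtain ⟨b, c, hbc⟩ := exists_forall_apply_ne_of_isSwap_map e
    (fun t ht => isSwap_map_of_isSwap e hαβ h5 (by omega) ht) a
  obtain ⟨h, hH, hh⟩ := htr (a, b) (a, c)
  rw [he, MonoidHom.mem_graph, MulEquiv.coe_toMonoidHom] at hH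
  exact hbc h.1 (congrArg Prod.fst hh) (hH ▸ congrArg Prod.snd hh)

end

theorem exists_mem_apply_eq_of_alternatingGroup_le (h₁ : Surjective (Prod.fst ∘ H.subtype))
    (hA : alternatingGroup β ≤ H.goursatSnd) (hβ : 4 ≤ Fintype.card β) {a₁ a₂ a₁' a₂' : α}
    (ha : a₁ = a₂ ↔ a₁' = a₂') {b₁ b₂ b₁' b₂' : β} (hb : b₁ = b₂ ↔ b₁' = b₂') :
    ∃ h ∈ H, h.1 a₁ = a₁' ∧ h.1 a₂ = a₂' ∧ h.2 b₁ = b₁' ∧ h.2 b₂ = b₂' := by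
  have := isMultiplyPretransitive α 2
  obtain ⟨σ, hσ₁, hσ₂⟩ := MulAction.exists_smul_eq_smul_eq_of_iff (G := Perm α) ha
  obtain ⟨⟨⟨σ', τ⟩, hστ⟩, rfl : σ' = σ⟩ := h₁ σ
  have := alternatingGroup.isMultiplyPretransitive β
  have := MulAction.isMultiplyPretransitive_of_le (G := alternatingGroup β) (α := β) (m := 2)
    (n := Nat.card β - 2) (by rw [Nat.card_eq_fintype_card]; omega) (Nat.sub_le _ _)
  obtain ⟨ρ, hρ₁, hρ₂⟩ := MulAction.exists_smul_eq_smul_eq_of_iff (G := alternatingGroup β)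
    (a₁ := τ b₁) (a₂ := τ b₂) (b₁ := b₁') (b₂ := b₂') (by rw [τ.injective.eq_iff]; exact hb)
  exact ⟨((1 : Perm α), (ρ : Perm β)) * (σ', τ), mul_mem (mem_goursatSnd.mp (hA ρ.2)) hστ,
    hσ₁, hσ₂, hρ₁, hρ₂⟩

theorem exists_mem_image_pair_eq_of_alternatingGroup_le (h₁ : Surjective (Prod.fst ∘ H.subtype))
    (hA : alternatingGroup β ≤ H.goursatSnd) (hβ : 4 ≤ Fintype.card β) {p₁ p₂ q₁ q₂ : α × β}
    (h₁₁ : p₁.1 = p₂.1 ↔ q₁.1 = q₂.1) (h₂₂ : p₁.2 = p₂.2 ↔ q₁.2 = q₂.2) :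
    ∃ h ∈ H, ({(h.1 p₁.1, h.2 p₁.2), (h.1 p₂.1, h.2 p₂.2)} : Set (α × β)) = {q₁, q₂} := by
  obtain ⟨h, hH, e₁, e₂, e₃, e₄⟩ := exists_mem_apply_eq_of_alternatingGroup_le h₁ hA hβ h₁₁ h₂₂
  exact ⟨h, hH, by rw [e₁, e₂, e₃, e₄]⟩

end Equiv.Perm

theorem stmt10_general (m n : ℕ) (hmn : m ≤ n) (hn : 5 ≤ n)
    (hmn6 : ¬ (m = 6 ∧ n = 6))
    (H : Subgroup (Equiv.Perm (Fin m) × Equiv.Perm (Fin n)))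
    (h1 : Subgroup.map (MonoidHom.fst (Equiv.Perm (Fin m)) (Equiv.Perm (Fin n))) H = ⊤)
    (h2 : Subgroup.map (MonoidHom.snd (Equiv.Perm (Fin m)) (Equiv.Perm (Fin n))) H = ⊤)
    (htr : ∀ p q : Fin m × Fin n, ∃ h ∈ H, (h.1 p.1, h.2 p.2) = q) :
    (∀ p1 p2 q1 q2 : Fin m × Fin n,
      p1.1 ≠ p2.1 → p1.2 ≠ p2.2 → q1.1 ≠ q2.1 → q1.2 ≠ q2.2 →
      ∃ h ∈ H, ({(h.1 p1.1, h.2 p1.2), (h.1 p2.1, h.2 p2.2)} : Set (Fin m × Fin n))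
        = {q1, q2}) ∧
    (∀ p1 p2 q1 q2 : Fin m × Fin n,
      p1.1 = p2.1 → p1.2 ≠ p2.2 → q1.1 = q2.1 → q1.2 ≠ q2.2 →
      ∃ h ∈ H, ({(h.1 p1.1, h.2 p1.2), (h.1 p2.1, h.2 p2.2)} : Set (Fin m × Fin n))
        = {q1, q2}) ∧
    (∀ p1 p2 q1 q2 : Fin m × Fin n,
      p1.1 ≠ p2.1 → p1.2 = p2.2 → q1.1 ≠ q2.1 → q1.2 = q2.2 →
      ∃ h ∈ H, ({(h.1 p1.1, h.2 p1.2), (h.1 p2.1, h.2 p2.2)} : Set (Fin m × Fin n))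
        = {q1, q2}) := by
  have hfst := surjective_comp_subtype_of_map_eq_top h1
  have hsnd := surjective_comp_subtype_of_map_eq_top h2
  have := normal_goursatSnd hsnd
  have hA : alternatingGroup (Fin n) ≤ H.goursatSnd :=
    alternatingGroup_le_of_normal (by simpa using hn) <| (nontrivial_iff_ne_bot _).mpr <|
      goursatSnd_ne_bot (by simpa using hmn) (by simpa using hn) (by simpa using hmn6) hfst hsnd htr
  have hpair := fun {p₁ p₂ q₁ q₂ : Fin m × Fin n} =>
    exists_mem_image_pair_eq_of_alternatingGroup_le (p₁ := p₁) (p₂ := p₂) (q₁ := q₁) (q₂ := q₂)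
      hfst hA (by rw [Fintype.card_fin]; omega)
  exact ⟨fun _ _ _ _ h₁ h₂ h₃ h₄ => hpair (iff_of_false h₁ h₃) (iff_of_false h₂ h₄),
    fun _ _ _ _ h₁ h₂ h₃ h₄ => hpair (iff_of_true h₁ h₃) (iff_of_false h₂ h₄),
    fun _ _ _ _ h₁ h₂ h₃ h₄ => hpair (iff_of_false h₁ h₃) (iff_of_true h₂ h₄)⟩

/-- Let `2 ≤ m ≤ n`, `5 ≤ n`, `(m,n) ≠ (6,6)`, and let `H ≤ S_m × S_n` have both projections
surjective and act transitively on the product. Then `H` acts transitively on the unordered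
pairs of points differing in both coordinates, on those agreeing in the first coordinate, and
on those agreeing in the second coordinate. -/
theorem stmt10 (m n : ℕ) (hm : 2 ≤ m) (hmn : m ≤ n) (hn : 5 ≤ n)
    (hmn6 : ¬ (m = 6 ∧ n = 6))
    (H : Subgroup (Equiv.Perm (Fin m) × Equiv.Perm (Fin n)))
    (h1 : Subgroup.map (MonoidHom.fst (Equiv.Perm (Fin m)) (Equiv.Perm (Fin n))) H = ⊤)
    (h2 : Subgroup.map (MonoidHom.snd (Equiv.Perm (Fin m)) (Equiv.Perm (Fin n))) H = ⊤)
    (htr : ∀ p q : Fin m × Fin n, ∃ h ∈ H, (h.1 p.1, h.2 p.2) = q) :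
    (∀ p1 p2 q1 q2 : Fin m × Fin n,
      p1.1 ≠ p2.1 → p1.2 ≠ p2.2 → q1.1 ≠ q2.1 → q1.2 ≠ q2.2 →
      ∃ h ∈ H, ({(h.1 p1.1, h.2 p1.2), (h.1 p2.1, h.2 p2.2)} : Set (Fin m × Fin n))
        = {q1, q2}) ∧
    (∀ p1 p2 q1 q2 : Fin m × Fin n,
      p1.1 = p2.1 → p1.2 ≠ p2.2 → q1.1 = q2.1 → q1.2 ≠ q2.2 →
      ∃ h ∈ H, ({(h.1 p1.1, h.2 p1.2), (h.1 p2.1, h.2 p2.2)} : Set (Fin m × Fin n))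
        = {q1, q2}) ∧
    (∀ p1 p2 q1 q2 : Fin m × Fin n,
      p1.1 ≠ p2.1 → p1.2 = p2.2 → q1.1 ≠ q2.1 → q1.2 = q2.2 →
      ∃ h ∈ H, ({(h.1 p1.1, h.2 p1.2), (h.1 p2.1, h.2 p2.2)} : Set (Fin m × Fin n))
        = {q1, q2}) :=
  stmt10_general m n hmn hn hmn6 H h1 h2 htr
end

section
/- Every automorphism of S_n is inner for n ≠ 6 and n ≥ 1; moreover every automorphism of S_6 sending some transposition to a transposition is inner. -/
open Equiv Equiv.Perm

theorem myswap6{n : ℕ} {f g : Perm (Fin n)} (hf : f.IsSwap) (hg : g.IsSwap) : (f * g)^6 = 1 := by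
  have hsupp : ((f*g).support).card ≤ 4 := by
    calc ((f*g).support).card ≤ (f.support ∪ g.support).card :=
          Finset.card_le_card (support_mul_le f g)
      _ ≤ f.support.card + g.support.card := Finset.card_union_le _ _
      _ ≤ 4 := by
          obtain ⟨a,b,hab,rfl⟩ := hf; obtain ⟨c,d,hcd,rfl⟩ := hg
          rw [card_support_swap hab, card_support_swap hcd]
  have hsign : Perm.sign (f*g) = 1 := by
    obtain ⟨a,b,hab,rfl⟩ := hf; obtain ⟨c,d,hcd,rfl⟩ := hg
    simp [sign_swap hab, sign_swap hcd]
  have hsum : (f*g).cycleType.sum ≤ 4 := by rw [sum_cycleType]; exact hsupp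
  have hmem : ∀ a ∈ (f*g).cycleType, a ∣ 6 := by
    intro a ha
    have h2 : 2 ≤ a := two_le_of_mem_cycleType ha
    have h4 : a ≤ 4 := le_trans (Multiset.le_sum_of_mem ha) hsum
    interval_cases a
    · norm_num
    · norm_num
    · exfalso
      have h40 : (f*g).cycleType = {4} := by
        have hce := Multiset.cons_erase ha
        have hs0 : ((f*g).cycleType.erase 4).sum = 0 := by
          have : (4 ::ₘ (f*g).cycleType.erase 4).sum ≤ 4 := by rw [hce]; exact hsum
          rw [Multiset.sum_cons] at this
          omega
        have he0 : (f*g).cycleType.erase 4 = 0 := by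
          by_contra h
          obtain ⟨x, hx⟩ := Multiset.exists_mem_of_ne_zero h
          have := two_le_of_mem_cycleType (Multiset.mem_of_mem_erase hx)
          have := Multiset.le_sum_of_mem hx
          omega
        rw [← hce, he0]
        rfl
      rw [sign_of_cycleType, h40] at hsign
      norm_num at hsign
  have : orderOf (f*g) ∣ 6 := by
    rw [← lcm_cycleType]; exact Multiset.lcm_dvd.mpr hmem
  exact orderOf_dvd_iff_pow_eq_one.mp this

theorem klein4: ∀ a b : Equiv.Perm (Fin 4), a * a = 1 → b * b = 1 →
    (∀ x, a x ≠ x) → (∀ x, b x ≠ x) → a * b = b * a := by decide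

theorem swap_rep{α : Type*} [DecidableEq α] {σ : Equiv.Perm α} (hσ : σ.IsSwap) {p : α}
    (hp : σ p ≠ p) : σ = Equiv.swap p (σ p) := by
  obtain ⟨u, v, huv, rfl⟩ := hσ
  rcases eq_or_ne p u with rfl | hpu
  · rw [swap_apply_left]
  · rcases eq_or_ne p v with rfl | hpv
    · rw [swap_apply_right]; exact swap_comm _ _
    · exact absurd (swap_apply_of_ne_of_ne hpu hpv) hp

theorem conj_isSwap{α : Type*} [DecidableEq α] {σ : Equiv.Perm α} (hσ : σ.IsSwap)
    (g : Equiv.Perm α) : (g * σ * g⁻¹).IsSwap := by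
  obtain ⟨u, v, huv, rfl⟩ := hσ
  exact ⟨g u, g v, fun h => huv (g.injective h), (swap_apply_apply g u v).symm⟩

theorem lemA{n : ℕ} (φ : MulAut (Equiv.Perm (Fin n))) {τ : Equiv.Perm (Fin n)}
    (hτ : τ.IsSwap) (hτ' : (φ τ).IsSwap) : ∀ σ : Equiv.Perm (Fin n), σ.IsSwap → (φ σ).IsSwap := by
  intro σ hσ
  obtain ⟨u, v, huv, rfl⟩ := hσ
  obtain ⟨w, x, hwx, rfl⟩ := hτ
  obtain ⟨c, hc⟩ := isConj_iff.mp (isConj_swap hwx huv)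
  rw [← hc, map_mul, map_mul, map_inv]
  exact conj_isSwap hτ' _

theorem lemC{n : ℕ} (φ : MulAut (Equiv.Perm (Fin n)))
    (h : ∀ τ : Equiv.Perm (Fin n), τ.IsSwap → (φ τ).IsSwap) :
    ∃ g : Equiv.Perm (Fin n), ∀ x, φ x = g * x * g⁻¹ := by
  rcases le_or_gt n 1 with hn | hn
  · refine ⟨1, fun x => ?_⟩
    have hx : ∀ y : Equiv.Perm (Fin n), y = 1 := by
      intro y; ext i; omega
    rw [hx x, hx (φ 1)]; simp
  · set z : Fin n := ⟨0, by omega⟩ with hz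
    have F1 : ∀ i : Fin n, i ≠ z → (φ (swap z i)).IsSwap := fun i hi =>
      h _ ⟨z, i, Ne.symm hi, rfl⟩
    have F2 : ∀ i j : Fin n, i ≠ z → j ≠ z → i ≠ j →
        φ (swap z i) * φ (swap z j) ≠ φ (swap z j) * φ (swap z i) := by
      intro i j hi hj hij hcomm
      rw [← map_mul, ← map_mul] at hcomm
      have h2 := congrArg (fun σ : Equiv.Perm (Fin n) => σ i) (φ.injective hcomm)
      simp only [mul_apply] at h2
      rw [swap_apply_of_ne_of_ne hi hij, swap_apply_right, swap_apply_left] at h2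
      exact hj h2.symm
    have F3 : ∀ i j : Fin n, i ≠ z → j ≠ z → i ≠ j →
        ∃ w, φ (swap z i) w ≠ w ∧ φ (swap z j) w ≠ w := by
      intro i j hi hj hij
      by_contra hcon
      push_neg at hcon
      have hdis : Perm.Disjoint (φ (swap z i)) (φ (swap z j)) := by
        intro w
        rcases eq_or_ne (φ (swap z i) w) w with hw | hw
        · exact Or.inl hw
        · exact Or.inr (hcon w hw)
      exact F2 i j hi hj hij hdis.commute
    -- moved points of a swap are among its two points
    have Fmov : ∀ (b c w : Fin n), Equiv.swap b c w ≠ w → w = b ∨ w = c := by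
      intro b c w hw
      by_contra hcon
      push_neg at hcon
      exact hw (swap_apply_of_ne_of_ne hcon.1 hcon.2)
    -- common point
    have hp : ∃ p, ∀ i, i ≠ z → φ (swap z i) p ≠ p := by
      set i₁ : Fin n := ⟨1, by omega⟩ with hi1def
      have hi₁ : i₁ ≠ z := by simp [hz, hi1def, Fin.ext_iff]
      obtain ⟨b, c, hbc, hbc'⟩ := F1 i₁ hi₁
      by_contra hcon
      push_neg at hcon
      obtain ⟨i, hiz, hib⟩ := hcon b
      obtain ⟨j, hjz, hjc⟩ := hcon c
      have hab1 : φ (swap z i₁) b ≠ b := by rw [hbc', swap_apply_left]; exact Ne.symm hbc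
      have hac1 : φ (swap z i₁) c ≠ c := by rw [hbc', swap_apply_right]; exact hbc
      have hii₁ : i ≠ i₁ := fun he => hab1 (he ▸ hib)
      have hji₁ : j ≠ i₁ := fun he => hac1 (he ▸ hjc)
      have hij : i ≠ j := by
        rintro rfl
        have hdis : Perm.Disjoint (φ (swap z i)) (φ (swap z i₁)) := by
          intro w
          rcases eq_or_ne (φ (swap z i₁) w) w with hw | hw
          · exact Or.inr hw
          · rcases Fmov b c w (by rwa [← hbc']) with rfl | rfl
            · exact Or.inl hib
            · exact Or.inl hjc
        exact F2 i i₁ hiz hi₁ hii₁ hdis.commute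
      -- a i moves c
      obtain ⟨w, hwi, hwi₁⟩ := F3 i i₁ hiz hi₁ hii₁
      have hic : φ (swap z i) c ≠ c := by
        rcases Fmov b c w (by rwa [← hbc']) with rfl | rfl
        · exact absurd hib hwi
        · exact hwi
      -- a j moves b
      obtain ⟨w', hwj, hwj₁⟩ := F3 j i₁ hjz hi₁ hji₁
      have hjb : φ (swap z j) b ≠ b := by
        rcases Fmov b c w' (by rwa [← hbc']) with rfl | rfl
        · exact hwj
        · exact absurd hjc hwj
      set x : Fin n := φ (swap z i) c with hxdef
      have hxi : φ (swap z i) = Equiv.swap c x := swap_rep (F1 i hiz) hic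
      have hxc : x ≠ c := hic
      have hxb : x ≠ b := by
        rintro rfl
        have : φ (swap z i) x = x := hib
        rw [hxi, swap_apply_right] at this
        exact hxc this.symm
      set y : Fin n := φ (swap z j) b with hydef
      have hyj : φ (swap z j) = Equiv.swap b y := swap_rep (F1 j hjz) hjb
      have hyb : y ≠ b := hjb
      have hyc : y ≠ c := by
        rintro rfl
        have : φ (swap z j) y = y := hjc
        rw [hyj, swap_apply_right] at this
        exact hyb this.symm
      -- common moved point of a i and a j is x = y
      obtain ⟨w'', hw1, hw2⟩ := F3 i j hiz hjz hij
      have hw1' : w'' = c ∨ w'' = x := Fmov c x w'' (by rwa [← hxi])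
      have hw2' : w'' = b ∨ w'' = y := Fmov b y w'' (by rwa [← hyj])
      have hxy : x = y := by
        rcases hw1' with rfl | rfl
        · exact absurd hjc hw2
        · rcases hw2' with hh | hh
          · exact absurd hh hxb
          · exact hh
      -- the three swaps relation
      have E : Equiv.swap b c * (Equiv.swap c x * Equiv.swap b x) = Equiv.swap c x := by
        ext w
        simp only [mul_apply]
        rcases eq_or_ne w b with hwb | hwb
        · rw [hwb, show Equiv.swap b x b = x from swap_apply_left _ _,
            show Equiv.swap c x x = c from swap_apply_right _ _,
            show Equiv.swap b c c = b from swap_apply_right _ _,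
            show Equiv.swap c x b = b from swap_apply_of_ne_of_ne hbc (Ne.symm hxb)]
        · rcases eq_or_ne w c with hwc | hwc
          · rw [hwc, show Equiv.swap b x c = c from
              swap_apply_of_ne_of_ne (Ne.symm hbc) (Ne.symm hxc),
              show Equiv.swap c x c = x from swap_apply_left _ _,
              show Equiv.swap b c x = x from swap_apply_of_ne_of_ne hxb hxc]
          · rcases eq_or_ne w x with hwx | hwx
            · rw [hwx, show Equiv.swap b x x = b from swap_apply_right _ _,
                show Equiv.swap c x b = b from swap_apply_of_ne_of_ne hbc (Ne.symm hxb),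
                show Equiv.swap b c b = c from swap_apply_left _ _,
                show Equiv.swap c x x = c from swap_apply_right _ _]
            · rw [swap_apply_of_ne_of_ne hwb hwx, swap_apply_of_ne_of_ne hwc hwx,
                swap_apply_of_ne_of_ne hwb hwc]
      have E2 : φ (swap z i₁) * (φ (swap z i) * φ (swap z j)) = φ (swap z i) := by
        rw [hbc', hxi, hyj, ← hxy, E]
      rw [← map_mul, ← map_mul] at E2
      have E3 := φ.injective E2
      have E4 := congrArg (fun σ : Equiv.Perm (Fin n) => σ z) E3
      simp only [mul_apply] at E4
      rw [swap_apply_left, swap_apply_of_ne_of_ne hjz (Ne.symm hij),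
        swap_apply_of_ne_of_ne hjz hji₁, swap_apply_left] at E4
      exact hij E4.symm
    obtain ⟨p, hp⟩ := hp
    classical
    set f : Fin n → Fin n := fun i => if i = z then p else φ (swap z i) p with hfdef
    have hfz : f z = p := by simp [hfdef]
    have hfi : ∀ i, i ≠ z → f i = φ (swap z i) p := by intro i hi; simp [hfdef, hi]
    have hrep : ∀ i, i ≠ z → φ (swap z i) = Equiv.swap p (f i) := by
      intro i hi
      rw [hfi i hi]
      exact swap_rep (F1 i hi) (hp i hi)
    have hfinj : Function.Injective f := by
      intro i j hij
      rcases eq_or_ne i z with rfl | hiz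
      · rcases eq_or_ne j z with rfl | hjz
        · rfl
        · rw [hfz, hfi j hjz] at hij
          exact absurd hij.symm (hp j hjz)
      · rcases eq_or_ne j z with rfl | hjz
        · rw [hfz, hfi i hiz] at hij
          exact absurd hij (hp i hiz)
        · have : φ (swap z i) = φ (swap z j) := by
            rw [hrep i hiz, hrep j hjz, hij]
          have h2 := φ.injective this
          have h3 := congrArg (fun σ : Equiv.Perm (Fin n) => σ z) h2
          simp only [swap_apply_left] at h3
          exact h3
    obtain ⟨g, hg⟩ : ∃ g : Equiv.Perm (Fin n), ∀ i, g i = f i := by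
      refine ⟨Equiv.ofBijective f (Finite.injective_iff_bijective.mp hfinj), fun i => rfl⟩
    have key1 : ∀ i, i ≠ z → φ (swap z i) = g * swap z i * g⁻¹ := by
      intro i hi
      rw [← swap_apply_apply g z i, hg, hg, hfz, hrep i hi]
    have key2 : ∀ σ : Equiv.Perm (Fin n), σ.IsSwap → φ σ = g * σ * g⁻¹ := by
      rintro σ ⟨u, v, huv, rfl⟩
      rcases eq_or_ne u z with rfl | huz
      · exact key1 v (Ne.symm huv)
      · rcases eq_or_ne v z with rfl | hvz
        · rw [swap_comm]; exact key1 u huz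
        · have hconj : Equiv.swap u v = swap z u * swap z v * (swap z u)⁻¹ := by
            rw [← swap_apply_apply]
            rw [show Equiv.swap z u z = u from swap_apply_left _ _,
              show Equiv.swap z u v = v from swap_apply_of_ne_of_ne hvz (Ne.symm huv)]
          rw [hconj, map_mul, map_mul, map_inv, key1 u huz, key1 v hvz]
          group
    have closure := Equiv.Perm.closure_isSwap (α := Fin n)
    have heq : φ.toMonoidHom = (MulAut.conj g).toMonoidHom := by
      apply MonoidHom.eq_of_eqOn_dense closure
      intro σ hσ
      simpa using key2 σ hσ
    refine ⟨g, fun x => ?_⟩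
    have := congrArg (fun ψ : Equiv.Perm (Fin n) →* Equiv.Perm (Fin n) => ψ x) heq
    simpa using this

theorem exists_fresh{n : ℕ} {s : Finset (Fin n)} (h : s.card < n) : ∃ x : Fin n, x ∉ s := by
  by_contra hc
  push_neg at hc
  have hsub : (Finset.univ : Finset (Fin n)) ⊆ s := fun x _ => hc x
  have := Finset.card_le_card hsub
  simp only [Finset.card_univ, Fintype.card_fin] at this
  omega

theorem card_insert_le'{α : Type*} [DecidableEq α] (a : α) (s : Finset α) {m : ℕ}
    (h : s.card ≤ m) : (insert a s).card ≤ m + 1 :=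
  le_trans (Finset.card_insert_le _ _) (by omega)

theorem lemB{n : ℕ} (hn : n ≠ 6) (φ : MulAut (Equiv.Perm (Fin n))) {τ : Equiv.Perm (Fin n)}
    (hτ : τ.IsSwap) : (φ τ).IsSwap := by
  by_contra hns
  obtain ⟨u, v, huv, hτrep⟩ := hτ
  set σ := φ τ with hσdef
  have hτ1 : τ ≠ 1 := by
    rw [hτrep]
    intro hh
    have := congrArg (fun ρ : Equiv.Perm (Fin n) => ρ u) hh
    simp only [swap_apply_left, one_apply] at this
    exact huv this.symm
  have hσ1 : σ ≠ 1 := fun hh => hτ1 (φ.injective (by rw [map_one, ← hσdef]; exact hh))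
  have hσ2 : σ * σ = 1 := by rw [hσdef, ← map_mul, hτrep, swap_mul_self, map_one]
  have hinv : ∀ w, σ (σ w) = w := by
    intro w
    have := congrArg (fun ρ : Equiv.Perm (Fin n) => ρ w) hσ2
    simpa [mul_apply] using this
  have hI1 : ∀ y : Equiv.Perm (Fin n), (σ * (y * σ * y⁻¹)) ^ 6 = 1 := by
    intro y
    have hy : y = φ (φ.symm y) := (φ.apply_symm_apply y).symm
    have hrw : σ * (y * σ * y⁻¹) = φ (τ * (φ.symm y * τ * (φ.symm y)⁻¹)) := by
      rw [map_mul, map_mul, map_mul, map_inv, ← hy, ← hσdef]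
    rw [hrw, ← map_pow, myswap6 ⟨u, v, huv, hτrep⟩ (conj_isSwap ⟨u, v, huv, hτrep⟩ _), map_one]
  have ha : ∃ a, σ a ≠ a := by
    by_contra hc
    push_neg at hc
    exact hσ1 (Equiv.ext hc)
  obtain ⟨a, ha⟩ := ha
  set b := σ a with hbdef
  have hsa : σ a = b := hbdef.symm
  have hsb : σ b = a := hinv a
  have hab : a ≠ b := Ne.symm ha
  by_cases hfix : ∃ e, σ e = e
  · -- CASE 1: σ has a fixed point: 5-point construction
    obtain ⟨e, hse⟩ := hfix
    have hc : ∃ c, σ c ≠ c ∧ c ≠ a ∧ c ≠ b := by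
      by_contra hcon
      push_neg at hcon
      apply hns
      rw [← card_support_eq_two]
      have hsub : σ.support = {a, b} := by
        apply Finset.Subset.antisymm
        · intro w hw
          rw [mem_support] at hw
          simp only [Finset.mem_insert, Finset.mem_singleton]
          rcases eq_or_ne w a with rfl | hwa
          · exact Or.inl rfl
          · exact Or.inr (hcon w hw hwa)
        · intro w hw
          simp only [Finset.mem_insert, Finset.mem_singleton] at hw
          rcases hw with rfl | rfl
          · rw [mem_support, hsa]; exact Ne.symm hab
          · rw [mem_support, hsb]; exact hab
      rw [hsub, Finset.card_insert_of_notMem (by simp [hab]), Finset.card_singleton]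
    obtain ⟨c, hcc, hca, hcb⟩ := hc
    set d := σ c with hddef
    have hsc : σ c = d := hddef.symm
    have hsd : σ d = c := hinv c
    have hdc : d ≠ c := hcc
    have hda : d ≠ a := fun hh => hcb (by have := congrArg σ hh; rwa [hsd, hsa] at this)
    have hdb : d ≠ b := fun hh => hca (by have := congrArg σ hh; rwa [hsd, hsb] at this)
    have hea : e ≠ a := fun hh =>
      hab (hh.symm.trans (by have := congrArg σ hh; rwa [hse, hsa] at this))
    have heb : e ≠ b := fun hh =>
      hab ((by have := congrArg σ hh; rwa [hse, hsb] at this : e = a).symm.trans hh)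
    have hec : e ≠ c := fun hh =>
      hdc ((by have := congrArg σ hh; rwa [hse, hsc] at this : e = d).symm.trans hh)
    have hed : e ≠ d := fun hh =>
      hdc (hh.symm.trans (by have := congrArg σ hh; rwa [hse, hsd] at this))
    set y : Equiv.Perm (Fin n) := Equiv.swap b c * Equiv.swap d e with hydef
    have hya : y a = a := by
      rw [hydef, mul_apply,
        show Equiv.swap d e a = a from swap_apply_of_ne_of_ne (Ne.symm hda) (Ne.symm hea),
        show Equiv.swap b c a = a from swap_apply_of_ne_of_ne hab (Ne.symm hca)]
    have hyb : y b = c := by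
      rw [hydef, mul_apply,
        show Equiv.swap d e b = b from swap_apply_of_ne_of_ne (Ne.symm hdb) (Ne.symm heb),
        show Equiv.swap b c b = c from swap_apply_left _ _]
    have hyc : y c = b := by
      rw [hydef, mul_apply,
        show Equiv.swap d e c = c from swap_apply_of_ne_of_ne (Ne.symm hdc) (Ne.symm hec),
        show Equiv.swap b c c = b from swap_apply_right _ _]
    have hyd : y d = e := by
      rw [hydef, mul_apply,
        show Equiv.swap d e d = e from swap_apply_left _ _,
        show Equiv.swap b c e = e from swap_apply_of_ne_of_ne heb hec]
    have hye : y e = d := by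
      rw [hydef, mul_apply,
        show Equiv.swap d e e = d from swap_apply_right _ _,
        show Equiv.swap b c d = d from swap_apply_of_ne_of_ne hdb hdc]
    have hYa : y⁻¹ a = a := Perm.inv_eq_iff_eq.mpr hya.symm
    have hYb : y⁻¹ b = c := Perm.inv_eq_iff_eq.mpr hyc.symm
    have hYc : y⁻¹ c = b := Perm.inv_eq_iff_eq.mpr hyb.symm
    have hYd : y⁻¹ d = e := Perm.inv_eq_iff_eq.mpr hye.symm
    have hYe : y⁻¹ e = d := Perm.inv_eq_iff_eq.mpr hyd.symm
    have hρ : ∀ w, (σ * (y * σ * y⁻¹)) w = σ (y (σ (y⁻¹ w))) := by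
      intro w; simp only [mul_apply]
    have hρa : (σ * (y * σ * y⁻¹)) a = d := by rw [hρ, hYa, hsa, hyb, hsc]
    have hρd : (σ * (y * σ * y⁻¹)) d = c := by rw [hρ, hYd, hse, hye, hsd]
    have hρc : (σ * (y * σ * y⁻¹)) c = b := by rw [hρ, hYc, hsb, hya, hsa]
    have hρb : (σ * (y * σ * y⁻¹)) b = e := by rw [hρ, hYb, hsc, hyd, hse]
    have hρe : (σ * (y * σ * y⁻¹)) e = a := by rw [hρ, hYe, hsd, hyc, hsb]
    have hA : ((σ * (y * σ * y⁻¹)) ^ 6) a = d := by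
      rw [pow_succ, mul_apply, hρa, pow_succ, mul_apply, hρd, pow_succ, mul_apply, hρc,
        pow_succ, mul_apply, hρb, pow_succ, mul_apply, hρe, pow_one, hρa]
    rw [hI1 y, one_apply] at hA
    exact hda hA.symm
  · -- CASE 2: σ is fixed-point free
    push_neg at hfix
    rcases lt_or_ge n 7 with h7 | h7
    · interval_cases n
      · exact a.elim0
      · exact ha (Subsingleton.elim _ _)
      · apply hns
        rw [← card_support_eq_two]
        have hsub : σ.support = Finset.univ := by
          ext w; simp [mem_support, hfix w]
        rw [hsub]; rfl
      · -- n = 3 : impossible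
        obtain ⟨c, hcf⟩ := exists_fresh (s := {a, b}) (by
          have := card_insert_le' a {b} (Finset.card_singleton _).le; omega)
        simp only [Finset.mem_insert, Finset.mem_singleton, not_or] at hcf
        obtain ⟨hca', hcb'⟩ := hcf
        set d := σ c with hddef
        have hsd : σ d = c := hinv c
        have hdc : d ≠ c := hfix c
        have hda : d ≠ a := fun hh => hcb' (by have := congrArg σ hh; rwa [hsd, hsa] at this)
        have hdb : d ≠ b := fun hh => hca' (by have := congrArg σ hh; rwa [hsd, hsb] at this)
        have h4c : ({a, b, c, d} : Finset (Fin 3)).card = 4 := by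
          rw [Finset.card_insert_of_notMem (by simp [hab, Ne.symm hca', Ne.symm hda]),
            Finset.card_insert_of_notMem (by simp [Ne.symm hcb', Ne.symm hdb]),
            Finset.card_insert_of_notMem (by simp [Ne.symm hdc]), Finset.card_singleton]
        have hle : ({a, b, c, d} : Finset (Fin 3)).card ≤ 3 := by
          have := Finset.card_le_univ ({a, b, c, d} : Finset (Fin 3))
          simpa using this
        omega
      · -- n = 4 : Klein four-group argument
        obtain ⟨w, hwf⟩ := exists_fresh (s := {u, v}) (by
          have := card_insert_le' u {v} (Finset.card_singleton _).le; omega)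
        simp only [Finset.mem_insert, Finset.mem_singleton, not_or] at hwf
        obtain ⟨hwu, hwv⟩ := hwf
        set x := Equiv.swap v w with hxdef
        have hxτ : x * τ * x⁻¹ = Equiv.swap u w := by
          rw [hτrep, hxdef, ← swap_apply_apply,
            show Equiv.swap v w u = u from swap_apply_of_ne_of_ne huv (Ne.symm hwu),
            show Equiv.swap v w v = w from swap_apply_left _ _]
        have hnc : τ * (x * τ * x⁻¹) ≠ (x * τ * x⁻¹) * τ := by
          rw [hxτ, hτrep]
          intro hcomm
          have h2 := congrArg (fun ρ : Equiv.Perm (Fin 4) => ρ v) hcomm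
          simp only [mul_apply] at h2
          rw [show Equiv.swap u w v = v from swap_apply_of_ne_of_ne (Ne.symm huv) (Ne.symm hwv),
            show Equiv.swap u v v = u from swap_apply_right _ _,
            show Equiv.swap u w u = w from swap_apply_left _ _] at h2
          exact hwu h2.symm
        set σ'' := φ x * σ * (φ x)⁻¹ with hs2def
        have hsq : σ'' * σ'' = 1 := by
          have hh : σ'' * σ'' = φ x * (σ * σ) * (φ x)⁻¹ := by rw [hs2def]; group
          rw [hh, hσ2, mul_one, mul_inv_cancel]
        have hfpf : ∀ w', σ'' w' ≠ w' := by
          intro w' hw'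
          rw [hs2def] at hw'
          simp only [mul_apply] at hw'
          apply hfix ((φ x)⁻¹ w')
          have := congrArg (fun t => (φ x)⁻¹ t) hw'
          simpa using this
        have hcomm := klein4 σ σ'' hσ2 hsq hfix hfpf
        apply hnc
        apply φ.injective
        simp only [map_mul, map_inv, ← hσdef]
        calc φ τ * (φ x * φ τ * (φ x)⁻¹) = σ * σ'' := by rw [hs2def, ← hσdef]
          _ = σ'' * σ := hcomm
          _ = φ x * φ τ * (φ x)⁻¹ * φ τ := by rw [hs2def, ← hσdef]
      · -- n = 5 : impossible
        obtain ⟨c, hcf⟩ := exists_fresh (s := {a, b}) (by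
          have := card_insert_le' a {b} (Finset.card_singleton _).le; omega)
        simp only [Finset.mem_insert, Finset.mem_singleton, not_or] at hcf
        obtain ⟨hca', hcb'⟩ := hcf
        set d := σ c with hddef
        have hsc : σ c = d := hddef.symm
        have hsd : σ d = c := hinv c
        have hdc : d ≠ c := hfix c
        have hda : d ≠ a := fun hh => hcb' (by have := congrArg σ hh; rwa [hsd, hsa] at this)
        have hdb : d ≠ b := fun hh => hca' (by have := congrArg σ hh; rwa [hsd, hsb] at this)
        obtain ⟨e, hef⟩ := exists_fresh (s := {a, b, c, d}) (by
          have := card_insert_le' a {b, c, d}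
            (card_insert_le' b {c, d} (card_insert_le' c {d} (Finset.card_singleton _).le))
          omega)
        simp only [Finset.mem_insert, Finset.mem_singleton, not_or] at hef
        obtain ⟨hea', heb', hec', hed'⟩ := hef
        set f := σ e with hfdef
        have hse : σ e = f := hfdef.symm
        have hsf : σ f = e := hinv e
        have hfe : f ≠ e := hfix e
        have hfa : f ≠ a := fun hh => heb' (by have := congrArg σ hh; rwa [hsf, hsa] at this)
        have hfb : f ≠ b := fun hh => hea' (by have := congrArg σ hh; rwa [hsf, hsb] at this)
        have hfc : f ≠ c := fun hh => hed' (by have := congrArg σ hh; rwa [hsf, hsc] at this)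
        have hfd : f ≠ d := fun hh => hec' (by have := congrArg σ hh; rwa [hsf, hsd] at this)
        have h6c : ({a, b, c, d, e, f} : Finset (Fin 5)).card = 6 := by
          rw [Finset.card_insert_of_notMem (by
              simp [hab, Ne.symm hca', Ne.symm hda, Ne.symm hea', Ne.symm hfa]),
            Finset.card_insert_of_notMem (by
              simp [Ne.symm hcb', Ne.symm hdb, Ne.symm heb', Ne.symm hfb]),
            Finset.card_insert_of_notMem (by simp [Ne.symm hdc, Ne.symm hec', Ne.symm hfc]),
            Finset.card_insert_of_notMem (by simp [Ne.symm hed', Ne.symm hfd]),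
            Finset.card_insert_of_notMem (by simp [Ne.symm hfe]), Finset.card_singleton]
        have hle : ({a, b, c, d, e, f} : Finset (Fin 5)).card ≤ 5 := by
          have := Finset.card_le_univ ({a, b, c, d, e, f} : Finset (Fin 5))
          simpa using this
        omega
      · exact hn rfl
    · -- n ≥ 7 : octagon construction
      obtain ⟨c, hcf⟩ := exists_fresh (s := {a, b}) (by
        have := card_insert_le' a {b} (Finset.card_singleton _).le; omega)
      simp only [Finset.mem_insert, Finset.mem_singleton, not_or] at hcf
      obtain ⟨hca', hcb'⟩ := hcf
      set d := σ c with hddef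
      have hsc : σ c = d := hddef.symm
      have hsd : σ d = c := hinv c
      have hdc : d ≠ c := hfix c
      have hda : d ≠ a := fun hh => hcb' (by have := congrArg σ hh; rwa [hsd, hsa] at this)
      have hdb : d ≠ b := fun hh => hca' (by have := congrArg σ hh; rwa [hsd, hsb] at this)
      obtain ⟨e, hef⟩ := exists_fresh (s := {a, b, c, d}) (by
        have := card_insert_le' a {b, c, d}
          (card_insert_le' b {c, d} (card_insert_le' c {d} (Finset.card_singleton _).le))
        omega)
      simp only [Finset.mem_insert, Finset.mem_singleton, not_or] at hef
      obtain ⟨hea', heb', hec', hed'⟩ := hef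
      set f := σ e with hfdef
      have hse : σ e = f := hfdef.symm
      have hsf : σ f = e := hinv e
      have hfe : f ≠ e := hfix e
      have hfa : f ≠ a := fun hh => heb' (by have := congrArg σ hh; rwa [hsf, hsa] at this)
      have hfb : f ≠ b := fun hh => hea' (by have := congrArg σ hh; rwa [hsf, hsb] at this)
      have hfc : f ≠ c := fun hh => hed' (by have := congrArg σ hh; rwa [hsf, hsc] at this)
      have hfd : f ≠ d := fun hh => hec' (by have := congrArg σ hh; rwa [hsf, hsd] at this)
      obtain ⟨g0, hgf⟩ := exists_fresh (s := {a, b, c, d, e, f}) (by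
        have := card_insert_le' a {b, c, d, e, f}
          (card_insert_le' b {c, d, e, f}
            (card_insert_le' c {d, e, f}
              (card_insert_le' d {e, f} (card_insert_le' e {f} (Finset.card_singleton _).le))))
        omega)
      simp only [Finset.mem_insert, Finset.mem_singleton, not_or] at hgf
      obtain ⟨hga, hgb, hgc, hgd, hge, hgff⟩ := hgf
      set h0 := σ g0 with h0def
      have hsg : σ g0 = h0 := h0def.symm
      have hsh : σ h0 = g0 := hinv g0
      have hhg : h0 ≠ g0 := hfix g0
      have hha : h0 ≠ a := fun hh => hgb (by have := congrArg σ hh; rwa [hsh, hsa] at this)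
      have hhb : h0 ≠ b := fun hh => hga (by have := congrArg σ hh; rwa [hsh, hsb] at this)
      have hhc : h0 ≠ c := fun hh => hgd (by have := congrArg σ hh; rwa [hsh, hsc] at this)
      have hhd : h0 ≠ d := fun hh => hgc (by have := congrArg σ hh; rwa [hsh, hsd] at this)
      have hhe : h0 ≠ e := fun hh => hgff (by have := congrArg σ hh; rwa [hsh, hse] at this)
      have hhf : h0 ≠ f := fun hh => hge (by have := congrArg σ hh; rwa [hsh, hsf] at this)
      set y : Equiv.Perm (Fin n) :=
        Equiv.swap a c * (Equiv.swap c e * Equiv.swap e g0) with hydef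
      have hya : y a = c := by
        rw [hydef, mul_apply, mul_apply,
          show Equiv.swap e g0 a = a from swap_apply_of_ne_of_ne (Ne.symm hea') (Ne.symm hga),
          show Equiv.swap c e a = a from swap_apply_of_ne_of_ne (Ne.symm hca') (Ne.symm hea'),
          show Equiv.swap a c a = c from swap_apply_left _ _]
      have hyc : y c = e := by
        rw [hydef, mul_apply, mul_apply,
          show Equiv.swap e g0 c = c from swap_apply_of_ne_of_ne (Ne.symm hec') (Ne.symm hgc),
          show Equiv.swap c e c = e from swap_apply_left _ _,
          show Equiv.swap a c e = e from swap_apply_of_ne_of_ne hea' hec']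
      have hye : y e = g0 := by
        rw [hydef, mul_apply, mul_apply,
          show Equiv.swap e g0 e = g0 from swap_apply_left _ _,
          show Equiv.swap c e g0 = g0 from swap_apply_of_ne_of_ne hgc hge,
          show Equiv.swap a c g0 = g0 from swap_apply_of_ne_of_ne hga hgc]
      have hyg : y g0 = a := by
        rw [hydef, mul_apply, mul_apply,
          show Equiv.swap e g0 g0 = e from swap_apply_right _ _,
          show Equiv.swap c e e = c from swap_apply_right _ _,
          show Equiv.swap a c c = a from swap_apply_right _ _]
      have hyb : y b = b := by
        rw [hydef, mul_apply, mul_apply,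
          show Equiv.swap e g0 b = b from swap_apply_of_ne_of_ne (Ne.symm heb') (Ne.symm hgb),
          show Equiv.swap c e b = b from swap_apply_of_ne_of_ne (Ne.symm hcb') (Ne.symm heb'),
          show Equiv.swap a c b = b from swap_apply_of_ne_of_ne (Ne.symm hab) (Ne.symm hcb')]
      have hyd : y d = d := by
        rw [hydef, mul_apply, mul_apply,
          show Equiv.swap e g0 d = d from swap_apply_of_ne_of_ne (Ne.symm hed') (Ne.symm hgd),
          show Equiv.swap c e d = d from swap_apply_of_ne_of_ne hdc (Ne.symm hed'),
          show Equiv.swap a c d = d from swap_apply_of_ne_of_ne hda hdc]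
      have hyf : y f = f := by
        rw [hydef, mul_apply, mul_apply,
          show Equiv.swap e g0 f = f from swap_apply_of_ne_of_ne hfe (Ne.symm hgff),
          show Equiv.swap c e f = f from swap_apply_of_ne_of_ne hfc hfe,
          show Equiv.swap a c f = f from swap_apply_of_ne_of_ne hfa hfc]
      have hyh : y h0 = h0 := by
        rw [hydef, mul_apply, mul_apply,
          show Equiv.swap e g0 h0 = h0 from swap_apply_of_ne_of_ne hhe hhg,
          show Equiv.swap c e h0 = h0 from swap_apply_of_ne_of_ne hhc hhe,
          show Equiv.swap a c h0 = h0 from swap_apply_of_ne_of_ne hha hhc]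
      have hYa : y⁻¹ a = g0 := Perm.inv_eq_iff_eq.mpr hyg.symm
      have hYc : y⁻¹ c = a := Perm.inv_eq_iff_eq.mpr hya.symm
      have hYe : y⁻¹ e = c := Perm.inv_eq_iff_eq.mpr hyc.symm
      have hYg : y⁻¹ g0 = e := Perm.inv_eq_iff_eq.mpr hye.symm
      have hρ : ∀ w, (σ * (y * σ * y⁻¹)) w = σ (y (σ (y⁻¹ w))) := by
        intro w; simp only [mul_apply]
      have hρa : (σ * (y * σ * y⁻¹)) a = g0 := by rw [hρ, hYa, hsg, hyh, hsh]
      have hρg : (σ * (y * σ * y⁻¹)) g0 = e := by rw [hρ, hYg, hse, hyf, hsf]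
      have hρe : (σ * (y * σ * y⁻¹)) e = c := by rw [hρ, hYe, hsc, hyd, hsd]
      have hρc : (σ * (y * σ * y⁻¹)) c = a := by rw [hρ, hYc, hsa, hyb, hsb]
      have hA : ((σ * (y * σ * y⁻¹)) ^ 6) a = e := by
        rw [pow_succ, mul_apply, hρa, pow_succ, mul_apply, hρg, pow_succ, mul_apply, hρe,
          pow_succ, mul_apply, hρc, pow_succ, mul_apply, hρa, pow_one, hρg]
      rw [hI1 y, one_apply] at hA
      exact hea' hA.symm

/-- Every automorphism of `S_n` is inner for `n ≠ 6`, `n ≥ 1`; moreover every automorphism of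
`S_6` sending some transposition to a transposition is inner. -/
theorem stmt11 :
    (∀ n : ℕ, 1 ≤ n → n ≠ 6 → ∀ φ : MulAut (Equiv.Perm (Fin n)),
      ∃ g : Equiv.Perm (Fin n), ∀ x, φ x = g * x * g⁻¹) ∧
    (∀ φ : MulAut (Equiv.Perm (Fin 6)),
      (∃ τ : Equiv.Perm (Fin 6), τ.IsSwap ∧ (φ τ).IsSwap) →
      ∃ g : Equiv.Perm (Fin 6), ∀ x, φ x = g * x * g⁻¹) := by
  constructor
  · intro n _ h6 φ
    exact lemC φ (fun τ hτ => lemB h6 φ hτ)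
  · rintro φ ⟨τ, hτ, hφτ⟩
    exact lemC φ (lemA φ hτ hφτ)
end

section
/- Let φ : S_6 → S_6 be an outer automorphism. Then φ maps every transposition to a product of three disjoint transpositions; in particular, the image of a transposition under φ has no fixed points. -/
/-!
An automorphism of `S₆` preserves the sign (the sign is the only surjection onto `ℤˣ`), so it
sends a transposition to an odd involution: a transposition or a product of three disjoint
transpositions. If it sent transpositions to transpositions it would be inner. Indeed, distinct
transpositions commute iff they are disjoint, so the five transpositions through a point `i` go to
five pairwise intersecting transpositions; these all pass through one point `g i`, and conjugation
by the permutation `g` agrees with the automorphism on the generating transpositions.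
-/

open Equiv Function

theorem Finset.exists_notMem_of_card_lt {ι : Type*} [Fintype ι] (s : Finset ι)
    (h : s.card < Fintype.card ι) : ∃ j, j ∉ s := by
  simpa using Finset.exists_mem_notMem_of_card_lt_card (t := Finset.univ) h

namespace Equiv.Perm

variable {α : Type*}

theorem not_disjoint_iff {f g : Perm α} : ¬ f.Disjoint g ↔ ∃ x, f x ≠ x ∧ g x ≠ x := by
  simp [Disjoint]

variable [DecidableEq α]

theorem IsSwap.eq_swap_of_apply_ne {t : Perm α} (ht : t.IsSwap) {x y : α} (hxy : x ≠ y)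
    (hx : t x ≠ x) (hy : t y ≠ y) : t = swap x y := by
  obtain ⟨a, b, -, rfl⟩ := ht
  rw [swap_apply_ne_self_iff] at hx hy
  rcases hx.2 with rfl | rfl <;> rcases hy.2 with rfl | rfl
  exacts [absurd rfl hxy, rfl, swap_comm _ _, absurd rfl hxy]

theorem IsSwap.not_commute {s t : Perm α} (hs : s.IsSwap) (ht : t.IsSwap) (hst : s ≠ t) {x : α}
    (hsx : s x ≠ x) (htx : t x ≠ x) : ¬ Commute s t := by
  have hs' := hs.eq_swap_of_apply_ne hsx.symm hsx (s.injective.ne hsx)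
  have ht' := ht.eq_swap_of_apply_ne htx.symm htx (t.injective.ne htx)
  generalize s x = a at hs' hsx
  generalize t x = b at ht' htx
  subst hs' ht'
  have hab : a ≠ b := by rintro rfl; exact hst rfl
  intro hcomm
  have h := congr($(hcomm.eq) x)
  simp only [Perm.mul_apply, swap_apply_left] at h
  rw [swap_apply_of_ne_of_ne htx hab.symm, swap_apply_of_ne_of_ne hsx hab] at h
  exact hab h.symm

theorem not_disjoint_swap_iff {p q : α} (hpq : p ≠ q) {t : Perm α} :
    ¬ (swap p q).Disjoint t ↔ t p ≠ p ∨ t q ≠ q := by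
  simp [Disjoint, swap_apply_ne_self_iff, hpq]

/-- The only intersecting families of transpositions without a common point are the triangles
`{(x a), (x b), (a b)}`. -/
theorem exists_apply_ne_of_pairwise_not_disjoint {ι : Type*} [Fintype ι]
    (hι : 4 ≤ Fintype.card ι) {f : ι → Perm α} (hf : Injective f) (hswap : ∀ i, (f i).IsSwap)
    (hmeet : Pairwise fun i j => ¬ (f i).Disjoint (f j)) : ∃ x, ∀ i, f i x ≠ x := by
  classical
  obtain ⟨i₁, i₂, h₁₂⟩ := Fintype.exists_pair_of_one_lt_card (α := ι) (by omega)
  obtain ⟨x, hx₁, hx₂⟩ := not_disjoint_iff.mp (hmeet h₁₂)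
  refine ⟨x, fun k hkx => ?_⟩
  obtain ⟨k', hk'⟩ := Finset.exists_notMem_of_card_lt {i₁, i₂, k}
    (Finset.card_le_three.trans_lt (by omega))
  simp only [Finset.mem_insert, Finset.mem_singleton, not_or] at hk'
  obtain ⟨hk'₁, hk'₂, hk'k⟩ := hk'
  have e₁ := (hswap i₁).eq_swap_of_apply_ne hx₁.symm hx₁ ((f i₁).injective.ne hx₁)
  have e₂ := (hswap i₂).eq_swap_of_apply_ne hx₂.symm hx₂ ((f i₂).injective.ne hx₂)
  generalize f i₁ x = a at e₁ hx₁
  generalize f i₂ x = b at e₂ hx₂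
  have hab : a ≠ b := by rintro rfl; exact h₁₂ (hf (e₁.trans e₂.symm))
  have meet : ∀ {i j}, i ≠ j → ∀ {y z}, f i = swap y z → y ≠ z → f j y ≠ y ∨ f j z ≠ z :=
    fun hij _ _ e hyz => (not_disjoint_swap_iff hyz).mp (e ▸ hmeet hij)
  have hk₁ : i₁ ≠ k := by rintro rfl; rw [e₁, swap_apply_left] at hkx; exact hx₁ hkx
  have hk₂ : i₂ ≠ k := by rintro rfl; rw [e₂, swap_apply_left] at hkx; exact hx₂ hkx
  have ek : f k = swap a b := (hswap k).eq_swap_of_apply_ne hab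
    ((meet hk₁ e₁ hx₁.symm).resolve_left (not_not.mpr hkx))
    ((meet hk₂ e₂ hx₂.symm).resolve_left (not_not.mpr hkx))
  have eq_swap : ∀ {y z}, y ≠ z → f k' y ≠ y → f k' z ≠ z → f k' = swap y z :=
    (hswap k').eq_swap_of_apply_ne
  rcases meet (Ne.symm hk'k) ek hab with ha | hb
  · rcases meet (Ne.symm hk'₂) e₂ hx₂.symm with hx | hb
    · exact hk'₁ (hf ((eq_swap hx₁.symm hx ha).trans e₁.symm))
    · exact hk'k (hf ((eq_swap hab ha hb).trans ek.symm))
  · rcases meet (Ne.symm hk'₁) e₁ hx₁.symm with hx | ha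
    · exact hk'₂ (hf ((eq_swap hx₂.symm hx hb).trans e₂.symm))
    · exact hk'k (hf ((eq_swap hab ha hb).trans ek.symm))

theorem exists_conj_of_map_isSwap [Fintype α] (hα : 5 ≤ Fintype.card α) {φ : Perm α →* Perm α}
    (hinj : Injective φ) (hφ : ∀ σ : Perm α, σ.IsSwap → (φ σ).IsSwap) :
    ∃ g : Perm α, ∀ σ, φ σ = g * σ * g⁻¹ := by
  have hswap {i j : α} (h : i ≠ j) : (φ (swap i j)).IsSwap := hφ _ ⟨i, j, h, rfl⟩
  have hstar (i : α) : ∃ x, ∀ j : {j // j ≠ i}, φ (swap i j) x ≠ x := by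
    refine exists_apply_ne_of_pairwise_not_disjoint (by simp; omega)
      (fun j k h => Subtype.val_injective (swap_injective_of_left i (hinj h)))
      (fun j => hswap j.2.symm) (fun j k hjk => ?_)
    refine mt Disjoint.commute (mt (Commute.of_map hinj) ?_)
    refine IsSwap.not_commute ⟨i, j, j.2.symm, rfl⟩ ⟨i, k, k.2.symm, rfl⟩ ?_ (x := i) ?_ ?_
    · exact (swap_injective_of_left i).ne (Subtype.val_injective.ne hjk)
    · simpa using j.2
    · simpa using k.2
  choose g hg using hstar
  have hg' {i j : α} (h : i ≠ j) : φ (swap i j) (g i) ≠ g i := hg i ⟨j, h.symm⟩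
  have hg_inj : Injective g := by
    intro i i' hii'
    by_contra hne
    obtain ⟨j, hj⟩ := Finset.exists_notMem_of_card_lt {i, i'}
      (Finset.card_le_two.trans_lt (by omega))
    obtain ⟨k, hk⟩ := Finset.exists_notMem_of_card_lt {i, i', j}
      (Finset.card_le_three.trans_lt (by omega))
    simp only [Finset.mem_insert, Finset.mem_singleton, not_or] at hj hk
    have hdisj : (swap i j).Disjoint (swap i' k) := disjoint_swap_swap (by simp [*, Ne.symm])
    refine (hswap (Ne.symm hj.1)).not_commute (hswap (Ne.symm hk.2.1)) ?_ (hg' (Ne.symm hj.1))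
      (hii' ▸ hg' (Ne.symm hk.2.1)) (hdisj.commute.map φ)
    refine hinj.ne fun h => hj.1 ?_
    simpa [swap_apply_of_ne_of_ne hne (Ne.symm hk.1)] using congr($h i)
  have hφswap {i j : α} (h : i ≠ j) : φ (swap i j) = swap (g i) (g j) :=
    (hswap h).eq_swap_of_apply_ne (hg_inj.ne h) (hg' h) (swap_comm i j ▸ hg' h.symm)
  let g' := Equiv.ofBijective g hg_inj.bijective_of_finite
  have hφ_eq : φ = (MulAut.conj g').toMonoidHom := by
    refine MonoidHom.eq_of_eqOn_denseM mclosure_isSwap ?_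
    rintro _ ⟨i, j, h, rfl⟩
    simp [hφswap h, ← swap_apply_apply, g']
  exact ⟨g', fun σ => by rw [hφ_eq]; rfl⟩

theorem sign_mulAut_apply [Fintype α] (φ : MulAut (Perm α)) (σ : Perm α) :
    sign (φ σ) = sign σ := by
  cases subsingleton_or_nontrivial α
  · rw [Subsingleton.elim σ 1, map_one, map_one]
  · exact congr($(eq_sign_of_surjective_hom (s := sign.comp φ.toMonoidHom)
      ((sign_surjective α).comp φ.surjective)) σ)

theorem isSwap_map_of_isSwap_s12 {β : Type*} [DecidableEq β] (φ : Perm α →* Perm β) {τ σ : Perm α}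
    (hτ : τ.IsSwap) (hφτ : (φ τ).IsSwap) (hσ : σ.IsSwap) : (φ σ).IsSwap := by
  obtain ⟨u, v, huv, rfl⟩ := hτ
  obtain ⟨x, y, hxy, rfl⟩ := hσ
  obtain ⟨a, b, hab, hφuv⟩ := hφτ
  obtain ⟨c, hc⟩ := isConj_iff.mp (φ.map_isConj (isConj_swap huv hxy))
  exact ⟨c a, c b, c.injective.ne hab, by rw [← hc, hφuv, swap_apply_apply]⟩

theorem cycleType_eq_replicate_three_two [Fintype α] (hα : Fintype.card α < 8) {σ : Perm α}
    (h2 : σ ^ 2 = 1) (hsign : sign σ = -1) (hσ : ¬ σ.IsSwap) :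
    σ.cycleType = Multiset.replicate 3 2 := by
  have hrep := cycleType_of_pow_prime_eq_one h2
  have hsum := sum_cycleType σ
  have hsgn := sign_of_cycleType σ
  rw [hrep] at hsum hsgn ⊢
  generalize Multiset.card σ.cycleType = n at hsum hsgn hrep ⊢
  simp only [Multiset.sum_replicate, Multiset.card_replicate, smul_eq_mul] at hsum hsgn
  have : n ≤ 3 := by have := σ.support.card_le_univ; omega
  interval_cases n
  · norm_num [hsign] at hsgn
  · exact absurd (card_support_eq_two.mp (by omega)) hσ
  · norm_num [hsign] at hsgn
  · rfl

theorem apply_ne_self_of_sum_cycleType_eq_card [Fintype α] {σ : Perm α}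
    (h : σ.cycleType.sum = Fintype.card α) (x : α) : σ x ≠ x :=
  mem_support.mp <| by
    rw [Finset.eq_univ_of_card _ ((sum_cycleType σ).symm.trans h)]
    exact Finset.mem_univ x

theorem exists_isSwap_disjoint_mul_mul_eq [Fintype α] {σ : Perm α}
    (h : σ.cycleType = Multiset.replicate 3 2) :
    ∃ a b c : Perm α, a.IsSwap ∧ b.IsSwap ∧ c.IsSwap ∧
      a.Disjoint b ∧ a.Disjoint c ∧ b.Disjoint c ∧ σ = a * b * c := by
  have hcard : σ.cycleFactorsFinset.card = 3 := by
    simpa [cycleType_def] using congr(Multiset.card $h)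
  obtain ⟨a, b, c, hab, hac, hbc, hS⟩ := Finset.card_eq_three.mp hcard
  have hswap {p : Perm α} (hp : p ∈ σ.cycleFactorsFinset) : p.IsSwap := by
    have hmem : p.support.card ∈ σ.cycleType := by
      rw [cycleType_def]
      exact Multiset.mem_map_of_mem _ hp
    rw [h] at hmem
    exact card_support_eq_two.mp (Multiset.eq_of_mem_replicate hmem)
  have hdisj := cycleFactorsFinset_pairwise_disjoint σ
  have hprod := cycleFactorsFinset_noncommProd σ
  have hprod' : ∀ s (_ : s = ({a, b, c} : Finset (Perm α))) comm,
      s.noncommProd id comm = a * b * c := by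
    rintro _ rfl comm
    rw [Finset.noncommProd_insert_of_notMem _ _ _ _ (by simp [hab, hac]),
      Finset.noncommProd_insert_of_notMem _ _ _ _ (by simp [hbc]), Finset.noncommProd_singleton,
      id, id, id, mul_assoc]
  simp only [hS] at hswap hdisj
  exact ⟨a, b, c, hswap (by simp), hswap (by simp), hswap (by simp),
    hdisj (by simp) (by simp) hab, hdisj (by simp) (by simp) hac, hdisj (by simp) (by simp) hbc,
    hprod.symm.trans (hprod' _ hS _)⟩

end Equiv.Perm

open Equiv.Perm in
/-- An outer automorphism `φ` of `S_6` maps every transposition to a product of three disjoint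
transpositions; in particular, the image of a transposition under `φ` has no fixed points. -/
theorem stmt12 (φ : MulAut (Equiv.Perm (Fin 6)))
    (houter : ¬ ∃ g : Equiv.Perm (Fin 6), ∀ x, φ x = g * x * g⁻¹) :
    ∀ τ : Equiv.Perm (Fin 6), τ.IsSwap →
      (∃ a b c : Equiv.Perm (Fin 6), a.IsSwap ∧ b.IsSwap ∧ c.IsSwap ∧
        a.Disjoint b ∧ a.Disjoint c ∧ b.Disjoint c ∧ φ τ = a * b * c) ∧
      (∀ i : Fin 6, φ τ i ≠ i) := by
  intro τ hτ
  have hsq : φ τ ^ 2 = 1 := by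
    obtain ⟨x, y, -, rfl⟩ := hτ
    rw [← map_pow, sq, swap_mul_self, map_one]
  have hsign : sign (φ τ) = -1 := by rw [sign_mulAut_apply, hτ.sign_eq]
  have hnot_swap : ¬ (φ τ).IsSwap := fun h =>
    houter (exists_conj_of_map_isSwap (by simp) φ.injective
      (fun _ => isSwap_map_of_isSwap_s12 φ.toMonoidHom hτ h))
  have hcycle := cycleType_eq_replicate_three_two (by simp) hsq hsign hnot_swap
  exact ⟨exists_isSwap_disjoint_mul_mul_eq hcycle,
    apply_ne_self_of_sum_cycleType_eq_card (by simp [hcycle])⟩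
end

section
/- Let φ : S_6 → S_6 be an outer automorphism, and let N be a subgroup of index 2 in the stabilizer of some point i ∈ {0,...,5} (so |N| = 60). Then φ(N) acts doubly transitively on {0,...,5}. -/
/-!
`N` is normal of order `60` in the point stabiliser `S = stab i`, so `M = φ(N)` contains an
element `g` of order `5`, a `5`-cycle with a single fixed point `p`. If `M` fixed `p`, then `p`
would be the only point fixed by `M`, so `φ(S)`, which normalises `M`, would fix `p` as well;
but an automorphism of `S_n` mapping a point stabiliser into a point stabiliser is inner.
Hence some element of `M` moves `p`, which makes `M` transitive, while the powers of `g` make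
the stabiliser of `p` in `M` transitive on the other five points.
-/

open Equiv Equiv.Perm MulAction

namespace Equiv.Perm

variable {α : Type*}

def IsDoublyTransitive (H : Subgroup (Perm α)) : Prop :=
  ∀ a b c d : α, a ≠ b → c ≠ d → ∃ x ∈ H, x a = c ∧ x b = d

/- The conjugating permutation is `k ↦ φ (swap i k) j`; it intertwines `s` with `φ s` because
`(swap i (s k))⁻¹ * s * swap i k` fixes `i`. -/
theorem exists_eq_conj_of_map_stabilizer_le [Finite α] [DecidableEq α] (φ : MulAut (Perm α))
    {i j : α} (h : (stabilizer (Perm α) i).map φ.toMonoidHom ≤ stabilizer (Perm α) j) :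
    ∃ σ : Perm α, ∀ x, φ x = σ * x * σ⁻¹ := by
  set f : α → α := fun k => φ (swap i k) j
  have hf : ∀ s k, φ s (f k) = f (s k) := by
    intro s k
    have hfix : ((swap i (s k))⁻¹ * s * swap i k) i = i := by simp
    have := h ⟨_, hfix, rfl⟩
    rwa [mem_stabilizer_iff, MulEquiv.coe_toMonoidHom, map_mul, map_mul, map_inv, Perm.smul_def,
      mul_apply, mul_apply, inv_eq_iff_eq] at this
  have hsurj : f.Surjective := fun z =>
    ⟨φ.symm (swap (f i) z) i, by rw [← hf, MulEquiv.apply_symm_apply, swap_apply_left]⟩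
  refine ⟨Equiv.ofBijective f (Finite.surjective_iff_bijective.mp hsurj), fun x => ?_⟩
  rw [eq_mul_inv_iff_mul_eq]
  ext k
  exact hf x k

theorem exists_fixed_iff_eq_of_card_support [Fintype α] [DecidableEq α] (g : Perm α)
    (hg : g.support.card + 1 = Fintype.card α) : ∃ p, ∀ x, g x = x ↔ x = p := by
  obtain ⟨p, hp⟩ :=
    Finset.card_eq_one.mp (by rw [Finset.card_compl]; omega : g.supportᶜ.card = 1)
  exact ⟨p, fun x => by simpa using Finset.ext_iff.mp hp x⟩

theorem isDoublyTransitive_of_isCycle [Finite α] {H : Subgroup (Perm α)} {g : Perm α} {p : α}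
    (hgH : g ∈ H) (hg : g.IsCycle) (hfix : ∀ x, g x = x ↔ x = p) (hmove : ∃ m ∈ H, m p ≠ p) :
    IsDoublyTransitive H := by
  have hpow : ∀ x y, x ≠ p → y ≠ p → ∃ k : ℕ, (g ^ k) x = y := fun x y hx hy =>
    hg.exists_pow_eq (mt (hfix x).mp hx) (mt (hfix y).mp hy)
  have hreach : ∀ x, ∃ u ∈ H, u x = p := by
    intro x
    by_cases hx : x = p
    · exact ⟨1, H.one_mem, hx⟩
    obtain ⟨m, hmH, hm⟩ := hmove
    obtain ⟨k, hk⟩ := hpow x (m p) hx hm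
    exact ⟨m⁻¹ * g ^ k, H.mul_mem (H.inv_mem hmH) (H.pow_mem hgH k), by
      rw [mul_apply, hk, inv_eq_iff_eq]⟩
  intro a b c d hab hcd
  obtain ⟨u, huH, hu⟩ := hreach a
  obtain ⟨v, hvH, hv⟩ := hreach c
  obtain ⟨k, hk⟩ :=
    hpow (u b) (v d) (hu ▸ u.injective.ne hab.symm) (hv ▸ v.injective.ne hcd.symm)
  refine ⟨v⁻¹ * g ^ k * u, H.mul_mem (H.mul_mem (H.inv_mem hvH) (H.pow_mem hgH k)) huH, ?_, ?_⟩
  · rw [mul_apply, mul_apply, hu, pow_apply_eq_self_of_apply_eq_self ((hfix p).mpr rfl),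
      inv_eq_iff_eq, hv]
  · rw [mul_apply, mul_apply, hk, inv_eq_iff_eq]

end Equiv.Perm

theorem MulAction.le_stabilizer_of_le_normalizer {G α : Type*} [Group G] [MulAction G α]
    {H K : Subgroup G} (hK : K ≤ Subgroup.normalizer H) {p : α}
    (hp : ∀ x, (∀ h ∈ H, h • x = x) ↔ x = p) : K ≤ stabilizer G p := by
  intro k hk
  rw [mem_stabilizer_iff, ← hp]
  intro h hh
  have := (hp p).mpr rfl _ ((Subgroup.mem_normalizer_iff''.mp (hK hk) h).mp hh)
  rwa [mul_smul, mul_smul, inv_smul_eq_iff] at this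

/-- If `φ` is an outer automorphism of `S_6` and `N` is a subgroup of index `2` in the
stabilizer of some point `i`, then `φ(N)` acts doubly transitively on `{0,…,5}`. -/
theorem stmt14 (φ : MulAut (Equiv.Perm (Fin 6)))
    (houter : ¬ ∃ g : Equiv.Perm (Fin 6), ∀ x, φ x = g * x * g⁻¹)
    (i : Fin 6) (N : Subgroup (Equiv.Perm (Fin 6)))
    (hNs : N ≤ MulAction.stabilizer (Equiv.Perm (Fin 6)) i)
    (hidx : N.relIndex (MulAction.stabilizer (Equiv.Perm (Fin 6)) i) = 2) :
    ∀ a b c d : Fin 6, a ≠ b → c ≠ d →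
      ∃ x ∈ Subgroup.map φ.toMonoidHom N, x a = c ∧ x b = d := by
  set S := stabilizer (Perm (Fin 6)) i
  set M := N.map φ.toMonoidHom
  have hcard : Nat.card N * 12 = 720 := by
    have := N.card_mul_index
    rwa [← Subgroup.relIndex_mul_index hNs, hidx, index_stabilizer_of_transitive, Nat.card_perm,
      Nat.card_fin] at this
  have : Fact (Nat.Prime 5) := ⟨by norm_num⟩
  obtain ⟨⟨g, hgM⟩, hg⟩ := exists_prime_orderOf_dvd_card' (G := M) 5
    (by rw [Subgroup.card_map_of_injective φ.injective]; omega)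
  rw [Subgroup.orderOf_mk] at hg
  have hcycle : g.IsCycle := isCycle_of_prime_order' (by rw [hg]; norm_num) (by simp [hg])
  obtain ⟨p, hp⟩ := exists_fixed_iff_eq_of_card_support g (by rw [← hcycle.orderOf, hg]; simp)
  refine isDoublyTransitive_of_isCycle hgM hcycle hp ?_
  by_contra! hMp
  have : (N.subgroupOf S).Normal := Subgroup.normal_of_index_eq_two hidx
  have hnorm : S.map φ.toMonoidHom ≤ Subgroup.normalizer M :=
    Subgroup.map_equiv_normalizer_eq N φ ▸
      Subgroup.map_mono (Subgroup.le_normalizer_of_normal_subgroupOf hNs)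
  refine houter (exists_eq_conj_of_map_stabilizer_le φ (le_stabilizer_of_le_normalizer hnorm
    fun x => ⟨fun hx => (hp x).mp (hx g hgM), ?_⟩))
  rintro rfl m hm
  exact hMp m hm
end

section
/- Let T be a subgroup of S_6 of order 120 with no fixed point. Then the action of S_6 on the left cosets of T induces an embedding (injective homomorphism) ψ : S_6 → S_6, which is therefore an automorphism, and ψ is not inner. -/
/-!
The kernel of the action of `S_6` on `S_6 ⧸ T` is the normal core of `T`; a nontrivial normal
subgroup of `S_n` (`n ≥ 5`) contains `A_n`, which has index 2, so the core of a subgroup of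
index 6 is trivial and the action is faithful. If it were conjugation by `g`, then `T`, the
stabilizer of the trivial coset, would fix the point `g⁻¹ (b 1)`.
-/

open Equiv Equiv.Perm

namespace Equiv.Perm

variable {α : Type*} [Fintype α] [DecidableEq α]

theorem normalCore_eq_bot_of_two_lt_index (hα : 5 ≤ Nat.card α) {H : Subgroup (Perm α)}
    (hH : 2 < H.index) : H.normalCore = ⊥ := by
  by_contra hne
  have hA : alternatingGroup α ≤ H :=
    (alternatingGroup_le_of_normal hα ((Subgroup.nontrivial_iff_ne_bot _).mpr hne)).trans
      H.normalCore_le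
  have : Nontrivial α := Finite.one_lt_card_iff_nontrivial.mp (by omega)
  have hdvd : H.index ∣ 2 :=
    alternatingGroup.index_eq_two (α := α) ▸ Subgroup.index_dvd_of_le hA
  have := Nat.le_of_dvd two_pos hdvd
  omega

theorem injective_toPermHom_quotient (hα : 5 ≤ Nat.card α) {H : Subgroup (Perm α)}
    (hH : 2 < H.index) : Function.Injective (MulAction.toPermHom (Perm α) (Perm α ⧸ H)) := by
  rw [← MonoidHom.ker_eq_bot_iff, ← Subgroup.normalCore_eq_ker]
  exact normalCore_eq_bot_of_two_lt_index hα hH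

end Equiv.Perm

theorem exists_fixed_of_permCongr_toPermHom_eq_conj {α : Type*} {H : Subgroup (Perm α)}
    (b : (Perm α ⧸ H) ≃ α) {g : Perm α}
    (hg : ∀ x : Perm α,
      b.permCongr (MulAction.toPermHom (Perm α) (Perm α ⧸ H) x) = g * x * g⁻¹) :
    ∃ i : α, ∀ t ∈ H, t i = i := by
  refine ⟨g⁻¹ (b (1 : Perm α)), fun t ht => ?_⟩
  have hfix : t • ((1 : Perm α) : Perm α ⧸ H) = (1 : Perm α) := by
    rwa [← MulAction.mem_stabilizer_iff, MulAction.stabilizer_quotient]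
  have h := congrArg (· (b (1 : Perm α))) (hg t)
  simp only [permCongr_apply, symm_apply_apply, MulAction.toPermHom_apply,
    MulAction.toPerm_apply, hfix, Perm.mul_apply] at h
  simpa using congrArg (g⁻¹ : Perm α) h.symm

/-- If `T ≤ S_6` has order `120` and no fixed point, then the action of `S_6` on the left
cosets of `T` induces an injective homomorphism `ψ : S_6 → Sym(S_6/T)`; identifying the six
cosets with `{0,…,5}` by any bijection, `ψ` is an automorphism of `S_6` and is not inner. -/
theorem stmt15 (T : Subgroup (Equiv.Perm (Fin 6))) (hT : Nat.card T = 120)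
    (hfree : ¬ ∃ i : Fin 6, ∀ t ∈ T, t i = i) :
    Function.Injective
      (MulAction.toPermHom (Equiv.Perm (Fin 6)) (Equiv.Perm (Fin 6) ⧸ T)) ∧
    ∀ b : (Equiv.Perm (Fin 6) ⧸ T) ≃ Fin 6,
      Function.Bijective (fun x : Equiv.Perm (Fin 6) =>
        b.permCongr (MulAction.toPermHom (Equiv.Perm (Fin 6)) (Equiv.Perm (Fin 6) ⧸ T) x)) ∧
      ¬ ∃ g : Equiv.Perm (Fin 6), ∀ x : Equiv.Perm (Fin 6),
        b.permCongr (MulAction.toPermHom (Equiv.Perm (Fin 6)) (Equiv.Perm (Fin 6) ⧸ T) x)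
          = g * x * g⁻¹ := by
  have hindex : T.index = 6 := by
    have h := T.card_mul_index
    rw [hT, Nat.card_perm, Nat.card_fin] at h
    norm_num [Nat.factorial] at h
    omega
  have hinj := injective_toPermHom_quotient (by simp) (by omega : 2 < T.index)
  refine ⟨hinj, fun b => ⟨?_, ?_⟩⟩
  · exact Finite.injective_iff_bijective.mp (b.permCongr.injective.comp hinj)
  · rintro ⟨g, hg⟩
    exact hfree (exists_fixed_of_permCongr_toPermHom_eq_conj b hg)
end

section
/- Suppose X ⊆ {0,1,2} × {0,1,2} contains (0,0), has |X| = 3, and is a block for the action of S_3 × S_3, i.e., for every g ∈ S_3 × S_3 either g·X = X or (g·X) ∩ X = ∅. Then X = {0} × {0,1,2} or X = {0,1,2} × {0}. -/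
/-!
A block containing `(a, b)` is mapped onto itself by every `(σ, τ)` fixing `(a, b)`, so it is a
union of orbits of `Stab a × Stab b`. These orbits are `{(a, b)}`, `{a} × {b}ᶜ`, `{a}ᶜ × {b}` and
`{a}ᶜ × {b}ᶜ`; on `n ≥ 3` points the last one has `(n - 1)² > n - 1` elements, so a block with
`n` elements is `{(a, b)}` together with exactly one of the two middle orbits.
-/

open Equiv Set

lemma image_eq_self_of_mem_of_apply_eq {α : Type*} {f : α → α} {X : Set α}
    (hX : f '' X = X ∨ Disjoint (f '' X) X) {x : α} (hx : x ∈ X) (hfx : f x = x) :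
    f '' X = X :=
  hX.resolve_right fun h => disjoint_left.mp h ⟨x, hx, hfx⟩ hx

def IsPermProdBlock {α β : Type*} (X : Set (α × β)) : Prop :=
  ∀ g : Perm α × Perm β, Prod.map g.1 g.2 '' X = X ∨ Disjoint (Prod.map g.1 g.2 '' X) X

namespace IsPermProdBlock

variable {α β : Type*} {X : Set (α × β)} {a : α} {b : β}

lemma mem_of_apply_eq (hX : IsPermProdBlock X) (hab : (a, b) ∈ X) {σ : Perm α} {τ : Perm β}
    (hσ : σ a = a) (hτ : τ b = b) {p : α × β} (hp : p ∈ X) : (σ p.1, τ p.2) ∈ X := by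
  have hfix : Prod.map σ τ '' X = X :=
    image_eq_self_of_mem_of_apply_eq (hX (σ, τ)) hab (by simp [hσ, hτ])
  exact hfix ▸ mem_image_of_mem _ hp

lemma singleton_prod_univ_subset [DecidableEq β] (hX : IsPermProdBlock X) (hab : (a, b) ∈ X) {b' : β}
    (hb' : b' ≠ b) (h : (a, b') ∈ X) : {a} ×ˢ univ ⊆ X := by
  rintro ⟨x, c⟩ ⟨rfl : x = a, -⟩
  by_cases hc : c = b
  · exact hc ▸ hab
  · simpa using hX.mem_of_apply_eq hab (σ := 1) rfl
      (swap_apply_of_ne_of_ne (Ne.symm hb') (Ne.symm hc)) h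

lemma univ_prod_singleton_subset [DecidableEq α] (hX : IsPermProdBlock X) (hab : (a, b) ∈ X) {a' : α}
    (ha' : a' ≠ a) (h : (a', b) ∈ X) : univ ×ˢ {b} ⊆ X := by
  rintro ⟨x, c⟩ ⟨-, rfl : c = b⟩
  by_cases hx : x = a
  · exact hx ▸ hab
  · simpa using hX.mem_of_apply_eq hab (τ := 1)
      (swap_apply_of_ne_of_ne (Ne.symm ha') (Ne.symm hx)) rfl h

lemma compl_prod_compl_subset [DecidableEq α] [DecidableEq β] (hX : IsPermProdBlock X) (hab : (a, b) ∈ X) {a' : α} {b' : β}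
    (ha' : a' ≠ a) (hb' : b' ≠ b) (h : (a', b') ∈ X) : {a}ᶜ ×ˢ {b}ᶜ ⊆ X := by
  rintro ⟨x, c⟩ ⟨hx : x ≠ a, hc : c ≠ b⟩
  simpa using hX.mem_of_apply_eq hab (swap_apply_of_ne_of_ne (Ne.symm ha') (Ne.symm hx))
    (swap_apply_of_ne_of_ne (Ne.symm hb') (Ne.symm hc)) h

end IsPermProdBlock

theorem IsPermProdBlock.eq_singleton_prod_univ_or_eq_univ_prod_singleton {α : Type*}
    [Finite α] [DecidableEq α] {X : Set (α × α)} {a b : α} (hX : IsPermProdBlock X)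
    (hab : (a, b) ∈ X) (hcard : X.ncard = Nat.card α) (h3 : 3 ≤ Nat.card α) :
    X = {a} ×ˢ univ ∨ X = univ ×ˢ {b} := by
  obtain ⟨⟨a', b'⟩, hp, hne⟩ := exists_ne_of_one_lt_ncard (s := X) (by omega) (a, b)
  by_cases ha : a' = a
  · subst ha
    have hsub := hX.singleton_prod_univ_subset hab (fun hb => hne (by rw [hb])) hp
    refine .inl (eq_of_subset_of_ncard_le hsub ?_).symm
    simp [ncard_prod, hcard]
  by_cases hb : b' = b
  · subst hb
    have hsub := hX.univ_prod_singleton_subset hab ha hp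
    refine .inr (eq_of_subset_of_ncard_le hsub ?_).symm
    simp [ncard_prod, hcard]
  have hssub : {a}ᶜ ×ˢ {b}ᶜ ⊂ X :=
    ssubset_of_subset_not_subset (hX.compl_prod_compl_subset hab ha hb hp)
      fun h => (h hab).1 rfl
  have hlt := ncard_lt_ncard hssub
  rw [ncard_prod, ncard_compl, ncard_compl, ncard_singleton, ncard_singleton, hcard] at hlt
  obtain ⟨n, hn⟩ : ∃ n, Nat.card α = n + 1 := ⟨_, (Nat.sub_add_cancel (by omega)).symm⟩
  rw [hn, Nat.add_sub_cancel] at hlt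
  nlinarith

/-- If `X ⊆ {0,1,2} × {0,1,2}` contains `(0,0)`, has three elements, and is a block for the
coordinatewise action of `S_3 × S_3`, then `X = {0} × {0,1,2}` or `X = {0,1,2} × {0}`. -/
theorem stmt18 (X : Set (Fin 3 × Fin 3)) (h0 : ((0 : Fin 3), (0 : Fin 3)) ∈ X)
    (hcard : X.ncard = 3)
    (hblock : ∀ g : Equiv.Perm (Fin 3) × Equiv.Perm (Fin 3),
      (fun p : Fin 3 × Fin 3 => (g.1 p.1, g.2 p.2)) '' X = X ∨
        Disjoint ((fun p : Fin 3 × Fin 3 => (g.1 p.1, g.2 p.2)) '' X) X) :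
    X = ({0} : Set (Fin 3)) ×ˢ (Set.univ : Set (Fin 3)) ∨
      X = (Set.univ : Set (Fin 3)) ×ˢ ({0} : Set (Fin 3)) :=
  IsPermProdBlock.eq_singleton_prod_univ_or_eq_univ_prod_singleton hblock h0
    (by simpa using hcard) (by simp)
end

section
/- Let H be a subgroup of S_2 × S_4 containing all pairs (s,t) of equal parity. Then no 2-element subset X = {(0,i), (1,j)} of {0,1} × {0,1,2,3} with i ≠ j is a block for the action of H on {0,1} × {0,1,2,3}. -/
/-! A pair `{(0,i), (1,j)}` is moved onto `{(0,i), (1,k)}`, with `k ∉ {i, j}`, by `(1, t)`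
for the even permutation `t = (j k)(k l)` of `Fin 4`, where `l` is the fourth point. That image
meets the pair without being equal to it. -/

open Equiv

lemma Fin.exists_pair_ne_of_ne {i j : Fin 4} (hij : i ≠ j) :
    ∃ k l : Fin 4, k ≠ i ∧ k ≠ j ∧ l ≠ i ∧ l ≠ j ∧ k ≠ l := by
  revert i j; decide

lemma Equiv.Perm.exists_sign_eq_one_fix_apply_eq {α : Type*} [DecidableEq α] [Fintype α]
    {i j k l : α} (hij : i ≠ j) (hki : k ≠ i) (hkj : k ≠ j) (hli : l ≠ i) (hlj : l ≠ j)
    (hkl : k ≠ l) :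
    ∃ t : Perm α, Perm.sign t = 1 ∧ t i = i ∧ t j = k := by
  refine ⟨swap j k * swap k l, ?_, ?_, ?_⟩
  · rw [map_mul, Perm.sign_swap hkj.symm, Perm.sign_swap hkl]
    decide
  · simp [swap_apply_of_ne_of_ne, hij, hki.symm, hli.symm]
  · simp [swap_apply_of_ne_of_ne, hkj.symm, hlj.symm]

lemma Set.pair_ne_and_not_disjoint {β : Type*} {a b c : β} (hba : b ≠ a) (hbc : b ≠ c) :
    ¬ (({a, c} : Set β) = {a, b} ∨ Disjoint ({a, c} : Set β) {a, b}) := by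
  rintro (heq | hdis)
  · have hb : b ∈ ({a, c} : Set β) := heq ▸ Set.mem_insert_of_mem a rfl
    rcases hb with hb | hb
    exacts [hba hb, hbc hb]
  · exact hdis.ne_of_mem (Set.mem_insert a _) (Set.mem_insert a _) rfl

/-- If `H ≤ S_2 × S_4` contains all pairs of equal parity, then no 2-element subset
`X = {(0,i), (1,j)}` with `i ≠ j` is a block for the coordinatewise action of `H`. -/
theorem stmt19 (H : Subgroup (Equiv.Perm (Fin 2) × Equiv.Perm (Fin 4)))
    (hpar : ∀ (s : Equiv.Perm (Fin 2)) (t : Equiv.Perm (Fin 4)),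
      Equiv.Perm.sign s = Equiv.Perm.sign t → (s, t) ∈ H) :
    ∀ i j : Fin 4, i ≠ j →
      ¬ ∀ h ∈ H,
        (fun p : Fin 2 × Fin 4 => (h.1 p.1, h.2 p.2)) ''
            ({((0 : Fin 2), i), ((1 : Fin 2), j)} : Set (Fin 2 × Fin 4))
          = ({((0 : Fin 2), i), ((1 : Fin 2), j)} : Set (Fin 2 × Fin 4)) ∨
        Disjoint
          ((fun p : Fin 2 × Fin 4 => (h.1 p.1, h.2 p.2)) ''
            ({((0 : Fin 2), i), ((1 : Fin 2), j)} : Set (Fin 2 × Fin 4)))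
          ({((0 : Fin 2), i), ((1 : Fin 2), j)} : Set (Fin 2 × Fin 4)) := by
  intro i j hij hblock
  obtain ⟨k, l, hki, hkj, hli, hlj, hkl⟩ := Fin.exists_pair_ne_of_ne hij
  obtain ⟨t, ht, hti, htj⟩ := Perm.exists_sign_eq_one_fix_apply_eq hij hki hkj hli hlj hkl
  have hmem : ((1 : Perm (Fin 2)), t) ∈ H := hpar 1 t (by rw [ht, map_one])
  have himage : (fun p : Fin 2 × Fin 4 => ((1 : Perm (Fin 2)) p.1, t p.2)) ''
      {((0 : Fin 2), i), ((1 : Fin 2), j)} = {((0 : Fin 2), i), ((1 : Fin 2), k)} := by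
    simp [Set.image_pair, hti, htj]
  have hblock_t := hblock _ hmem
  rw [himage] at hblock_t
  exact Set.pair_ne_and_not_disjoint (by simp) (by simp [hkj.symm]) hblock_t
end
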